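/- arXiv:2006.05001 — 5 statements merged into one kernel-verified Lean document; each statement's English description precedes it below -/
import Mathlib

section
/- Let n_0 ≥ 1, L ≥ 1, and layer widths n_1,...,n_L with n_l ≥ n_0 for all l. There exists an L-layer ReLU feedforward network with input dimension n_0, hidden widths n_1,...,n_L, and scalar output whose number of linear regions is at least (∏_{l=1}^{L-1} ⌊n_l/n_0⌋^{n_0}) · ∑_{j=0}^{n_0} C(n_L, j), where ⌊·⌋ is the floor function and C(n,j) is the binomial coefficient. -/
open Matrix

/-- Hidden-layer outputs of a ReLU feedforward network: `h_0 = x`,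
`h_{l+1} = max(W_{l+1} h_l + b_{l+1}, 0)` componentwise. -/
noncomputable def reluHidden (n : ℕ → ℕ)
    (W : (l : ℕ) → Matrix (Fin (n (l + 1))) (Fin (n l)) ℝ)
    (b : (l : ℕ) → Fin (n (l + 1)) → ℝ)
    (x : Fin (n 0) → ℝ) : (l : ℕ) → Fin (n l) → ℝ
  | 0 => x
  | l + 1 => fun j => max (((W l).mulVec (reluHidden n W b x l) + b l) j) 0

/-- Activation pattern at input `x`: which hidden units (over the `L` hidden layers)
have strictly positive pre-activation. -/
def reluPattern (n : ℕ → ℕ)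
    (W : (l : ℕ) → Matrix (Fin (n (l + 1))) (Fin (n l)) ℝ)
    (b : (l : ℕ) → Fin (n (l + 1)) → ℝ)
    (L : ℕ) (x : Fin (n 0) → ℝ) : (l : Fin L) → Fin (n (l.1 + 1)) → Prop :=
  fun l j => 0 < ((W l.1).mulVec (reluHidden n W b x l.1) + b l.1) j

/-- The linear regions of a ReLU network: the maximal connected subsets of the input space on
which the activation pattern is constant, i.e. the connected components (within the level sets
of the activation-pattern map) of points of the input space. -/
def linearRegions (n : ℕ → ℕ)
    (W : (l : ℕ) → Matrix (Fin (n (l + 1))) (Fin (n l)) ℝ)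
    (b : (l : ℕ) → Fin (n (l + 1)) → ℝ)
    (L : ℕ) : Set (Set (Fin (n 0) → ℝ)) :=
  {R | ∃ x, R = connectedComponentIn
      {y | reluPattern n W b L y = reluPattern n W b L x} x}

/-!
Every set of inputs sharing an activation pattern is convex (along a segment inside it no
pre-activation changes sign, so the network is affine there), hence linear regions correspond
exactly to realised activation patterns, and it suffices to exhibit many inputs with pairwise
distinct patterns. Each of the first `L - 1` hidden layers applies to every coordinate the
`P_l`-fold zigzag map of `[0, 1]` onto itself, `P_l = ⌊n_l / n_0⌋`, built from `P_l` ReLUs per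
coordinate. The last hidden layer is an arrangement of `n_L` hyperplanes of `ℝ^{n_0}` with
`∑_{j ≤ n_0} C(n_L, j)` points of `(0, 1)^{n_0}` having distinct sign vectors: in the coefficient
space of monic polynomials of degree `n_0`, take the hyperplanes "vanishing at `m`", `m < n_L`,
and as points polynomials with prescribed roots. Pulling each such point back through an
arbitrary choice of zigzag branches in every layer gives an input whose pattern records both
the branches and the sign vector.
-/

open Finset Polynomial

theorem pos_convex_comb_iff_of_pos_iff {𝕜 : Type*} [CommRing 𝕜] [LinearOrder 𝕜]
    [IsStrictOrderedRing 𝕜] {p q a c : 𝕜} (hpq : 0 < p ↔ 0 < q) (ha : 0 ≤ a)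
    (hc : 0 ≤ c) (hac : a + c = 1) : 0 < a * p + c * q ↔ 0 < p := by
  constructor
  · intro h
    by_contra hp
    have hq : q ≤ 0 := not_lt.1 (mt hpq.2 hp)
    nlinarith
  · intro hp
    have hq := hpq.1 hp
    rcases ha.eq_or_lt with rfl | ha' <;> nlinarith

theorem max_zero_convex_comb_of_pos_iff {𝕜 : Type*} [CommRing 𝕜] [LinearOrder 𝕜]
    [IsStrictOrderedRing 𝕜] {p q a c : 𝕜} (hpq : 0 < p ↔ 0 < q) (ha : 0 ≤ a)
    (hc : 0 ≤ c) (hac : a + c = 1) : max (a * p + c * q) 0 = a * max p 0 + c * max q 0 := by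
  by_cases hp : 0 < p
  · rw [max_eq_left ((pos_convex_comb_iff_of_pos_iff hpq ha hc hac).2 hp).le, max_eq_left hp.le,
      max_eq_left (hpq.1 hp).le]
  · rw [max_eq_right (not_lt.1 (mt (pos_convex_comb_iff_of_pos_iff hpq ha hc hac).1 hp)),
      max_eq_right (not_lt.1 hp), max_eq_right (not_lt.1 (mt hpq.2 hp))]
    ring

theorem Matrix.mulVec_convex_comb_add {R m k : Type*} [CommRing R] [Fintype k]
    (M : Matrix m k R) (v : m → R) (u w : k → R) {a c : R} (hac : a + c = 1) :
    M *ᵥ (a • u + c • w) + v = a • (M *ᵥ u + v) + c • (M *ᵥ w + v) := by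
  ext j
  simp only [mulVec_add, mulVec_smul, Pi.add_apply, Pi.smul_apply, smul_eq_mul]
  linear_combination (-v j) * hac

section ConvexRegions

variable {n : ℕ → ℕ} {W : (l : ℕ) → Matrix (Fin (n (l + 1))) (Fin (n l)) ℝ}
  {b : (l : ℕ) → Fin (n (l + 1)) → ℝ} {L : ℕ}

theorem reluHidden_convex_comb {x y : Fin (n 0) → ℝ}
    (hxy : reluPattern n W b L x = reluPattern n W b L y) {a c : ℝ} (ha : 0 ≤ a) (hc : 0 ≤ c)
    (hac : a + c = 1) :
    ∀ l ≤ L, reluHidden n W b (a • x + c • y) l =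
      a • reluHidden n W b x l + c • reluHidden n W b y l
  | 0, _ => rfl
  | l + 1, hl => funext fun j => by
    have key := congrFun (Matrix.mulVec_convex_comb_add (W l) (b l) (reluHidden n W b x l)
      (reluHidden n W b y l) hac) j
    simp only [Pi.add_apply, Pi.smul_apply, smul_eq_mul] at key
    simp only [reluHidden, Pi.add_apply, Pi.smul_apply, smul_eq_mul]
    rw [reluHidden_convex_comb hxy ha hc hac l (by omega), key]
    exact max_zero_convex_comb_of_pos_iff (iff_of_eq (congrFun (congrFun hxy ⟨l, hl⟩) j)) ha hc hac

theorem convex_setOf_reluPattern_eq (π : (l : Fin L) → Fin (n (l.1 + 1)) → Prop) :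
    Convex ℝ {x | reluPattern n W b L x = π} := by
  intro x hx y hy a c ha hc hac
  have hxy : reluPattern n W b L x = reluPattern n W b L y := hx.trans hy.symm
  change reluPattern n W b L (a • x + c • y) = π
  rw [← hx]
  funext l j
  simp only [reluPattern]
  rw [reluHidden_convex_comb hxy ha hc hac l l.2.le, Matrix.mulVec_convex_comb_add _ _ _ _ hac]
  exact propext (pos_convex_comb_iff_of_pos_iff (iff_of_eq (congrFun (congrFun hxy l) j)) ha hc hac)

theorem linearRegions_eq_image_range :
    linearRegions n W b L =
      (fun π => {x | reluPattern n W b L x = π}) '' Set.range (reluPattern n W b L) := by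
  ext R
  constructor
  · rintro ⟨x, rfl⟩
    exact ⟨_, ⟨x, rfl⟩, ((convex_setOf_reluPattern_eq _).isPreconnected.connectedComponentIn
      rfl).symm⟩
  · rintro ⟨_, ⟨x, rfl⟩, rfl⟩
    exact ⟨x, ((convex_setOf_reluPattern_eq _).isPreconnected.connectedComponentIn rfl).symm⟩

theorem ncard_linearRegions :
    (linearRegions n W b L).ncard = (Set.range (reluPattern n W b L)).ncard := by
  rw [linearRegions_eq_image_range]
  refine Set.InjOn.ncard_image ?_
  rintro _ ⟨x, rfl⟩ _ ⟨y, rfl⟩ h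
  exact (Set.ext_iff.1 h x).1 rfl

theorem card_le_ncard_linearRegions {K : Type*} [Finite K] {ι : K → Fin (n 0) → ℝ}
    (hι : Function.Injective (reluPattern n W b L ∘ ι)) :
    Nat.card K ≤ (linearRegions n W b L).ncard := by
  rw [ncard_linearRegions, ← Set.ncard_range_of_injective hι]
  exact Set.ncard_le_ncard (Set.range_comp_subset_range _ _)

end ConvexRegions

theorem Finset.prod_pos_iff_even_card_filter_neg {ι R : Type*} [CommRing R] [LinearOrder R]
    [IsStrictOrderedRing R] {s : Finset ι} {f : ι → R} (hf : ∀ i ∈ s, f i ≠ 0) :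
    0 < ∏ i ∈ s, f i ↔ Even #{i ∈ s | f i < 0} := by
  induction s using Finset.cons_induction with
  | empty => simp
  | cons a s ha ih =>
    have hs := ih fun i hi => hf i (mem_cons_of_mem hi)
    rw [prod_cons, filter_cons]
    rcases (hf a (mem_cons_self a s)).lt_or_gt with hneg | hpos
    · rw [if_pos hneg, card_cons, Nat.even_add_one, ← hs, ← smul_eq_mul,
        smul_pos_iff_of_neg_left hneg, not_lt, le_iff_lt_or_eq, or_iff_left]
      exact (prod_ne_zero_iff.2 fun i hi => hf i (mem_cons_of_mem hi))
    · rw [if_neg hpos.not_gt, ← hs, mul_pos_iff_of_pos_left hpos]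

theorem Finset.card_filter_powerset_card_le {α : Type*} (s : Finset α) (d : ℕ) :
    #{t ∈ s.powerset | #t ≤ d} = ∑ j ∈ range (d + 1), (#s).choose j := by
  rw [card_eq_sum_card_fiberwise (f := card) (t := range (d + 1))
    fun t ht => mem_range_succ_iff.2 (mem_filter.1 ht).2]
  refine sum_congr rfl fun j hj => ?_
  rw [← card_powersetCard, powersetCard_eq_filter, filter_filter]
  congr 1
  exact filter_congr fun t _ => ⟨fun h => h.2, fun h => ⟨h ▸ mem_range_succ_iff.1 hj, h⟩⟩

theorem Finset.card_filter_le_eq_card_filter_succ_le_add (s : Finset ℕ) (m : ℕ) :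
    #{c ∈ s | m ≤ c} = #{c ∈ s | m + 1 ≤ c} + if m ∈ s then 1 else 0 := by
  rw [card_filter, card_filter, ← sum_ite_eq' s m (fun _ => 1), ← sum_add_distrib]
  refine sum_congr rfl fun c _ => ?_
  split_ifs <;> omega

theorem Finset.eq_of_even_card_filter_le_iff {M : ℕ} {s t : Finset ℕ} (hs : s ⊆ range M)
    (ht : t ⊆ range M) (h : ∀ m < M, Even #{c ∈ s | m ≤ c} ↔ Even #{c ∈ t | m ≤ c}) : s = t := by
  have h' : ∀ m, Even #{c ∈ s | m ≤ c} ↔ Even #{c ∈ t | m ≤ c} := by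
    intro m
    rcases lt_or_ge m M with hm | hm
    · exact h m hm
    · have hempty : ∀ u ⊆ range M, ({c ∈ u | m ≤ c} : Finset ℕ) = ∅ := fun u hu =>
        filter_eq_empty_iff.2 fun c hc => not_le.2 ((mem_range.1 (hu hc)).trans_le hm)
      rw [hempty s hs, hempty t ht]
  ext m
  have := h' m
  rw [card_filter_le_eq_card_filter_succ_le_add s,
    card_filter_le_eq_card_filter_succ_le_add t, Nat.even_add, Nat.even_add, h' (m + 1)] at this
  by_cases hms : m ∈ s <;> by_cases hmt : m ∈ t <;> simp_all [Nat.even_iff] <;> omega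

theorem Polynomial.Monic.eval_eq_dotProduct_coeff {R : Type*} [CommRing R] {p : R[X]} {d : ℕ}
    (hp : p.Monic) (hd : p.natDegree = d) (x : R) :
    p.eval x = (fun i : Fin d => x ^ (i : ℕ)) ⬝ᵥ (fun i => p.coeff i) + x ^ d := by
  rw [eval_eq_sum_range, hd, sum_range_succ, ← hd, hp.coeff_natDegree, hd, one_mul,
    dotProduct, Fin.sum_univ_eq_sum_range (fun i => x ^ i * p.coeff i)]
  simp only [mul_comm]

noncomputable def halfIntegerRootPoly (d : ℕ) (s : Finset ℕ) : ℝ[X] :=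
  (∏ c ∈ s, (X - C ((c : ℝ) + 1 / 2))) * (X + C 1) ^ (d - #s)

theorem halfIntegerRootPoly_monic (d : ℕ) (s : Finset ℕ) : (halfIntegerRootPoly d s).Monic :=
  (monic_prod_of_monic _ _ fun _ _ => monic_X_sub_C _).mul ((monic_X_add_C 1).pow _)

theorem natDegree_halfIntegerRootPoly {d : ℕ} {s : Finset ℕ} (hs : #s ≤ d) :
    (halfIntegerRootPoly d s).natDegree = d := by
  rw [halfIntegerRootPoly, (monic_prod_of_monic _ _ fun _ _ => monic_X_sub_C _).natDegree_mul
    ((monic_X_add_C 1).pow _), natDegree_prod_of_monic _ _ fun _ _ => monic_X_sub_C _,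
    natDegree_pow, natDegree_X_add_C]
  simp only [natDegree_X_sub_C, sum_const, smul_eq_mul, mul_one]
  omega

theorem halfIntegerRootPoly_eval_pos_iff (d : ℕ) (s : Finset ℕ) (m : ℕ) :
    0 < (halfIntegerRootPoly d s).eval (m : ℝ) ↔ Even #{c ∈ s | m ≤ c} := by
  have hneg : ∀ c : ℕ, (m : ℝ) - (c + 1 / 2) < 0 ↔ m ≤ c := fun c => by
    constructor <;> intro h
    · by_contra h'
      have : (c : ℝ) + 1 ≤ m := by exact_mod_cast not_le.1 h'
      linarith
    · have : (m : ℝ) ≤ c := by exact_mod_cast h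
      linarith
  have hne : ∀ c : ℕ, (m : ℝ) - (c + 1 / 2) ≠ 0 := fun c => by
    rcases le_or_gt m c with h | h
    · exact ((hneg c).2 h).ne
    · have : (c : ℝ) + 1 ≤ m := by exact_mod_cast h
      linarith
  simp only [halfIntegerRootPoly, eval_mul, eval_pow, eval_prod, eval_sub, eval_add, eval_X,
    eval_C]
  rw [mul_pos_iff_of_pos_right (by positivity), prod_pos_iff_even_card_filter_neg fun c _ => hne c]
  simp only [hneg]

/-- Hyperplane `m` is "evaluation at `m`" on coefficient vectors of monic polynomials of degree
`d`; the points are the polynomials `halfIntegerRootPoly d s`, whose sign at `m < M` is the parity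
of `#{c ∈ s | m ≤ c}`, and these parities determine `s ⊆ range M`. -/
theorem exists_finset_injOn_sign_vector (d M : ℕ) :
    ∃ (A : ℕ → Fin d → ℝ) (B : ℕ → ℝ) (S : Finset (Fin d → ℝ)),
      #S = ∑ j ∈ range (d + 1), M.choose j ∧
      Set.InjOn (fun p (m : Fin M) => 0 < A m ⬝ᵥ p + B m) S := by
  let A : ℕ → Fin d → ℝ := fun m i => (m : ℝ) ^ (i : ℕ)
  let B : ℕ → ℝ := fun m => (m : ℝ) ^ d
  let F := {s ∈ (range M).powerset | #s ≤ d}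
  let coeffs (s : Finset ℕ) : Fin d → ℝ := fun i => (halfIntegerRootPoly d s).coeff i
  have hsign : ∀ s ∈ F, ∀ m : ℕ, 0 < A m ⬝ᵥ coeffs s + B m ↔ Even #{c ∈ s | m ≤ c} :=
    fun s hs m => by
      rw [← (halfIntegerRootPoly_monic d s).eval_eq_dotProduct_coeff
        (natDegree_halfIntegerRootPoly (mem_filter.1 hs).2), halfIntegerRootPoly_eval_pos_iff]
  have hinj : ∀ s ∈ F, ∀ t ∈ F, (fun m : Fin M => 0 < A m ⬝ᵥ coeffs s + B m) =
      (fun m : Fin M => 0 < A m ⬝ᵥ coeffs t + B m) → s = t := by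
    intro s hs t ht h
    refine eq_of_even_card_filter_le_iff (mem_powerset.1 (mem_filter.1 hs).1)
      (mem_powerset.1 (mem_filter.1 ht).1) fun m hm => ?_
    rw [← hsign s hs, ← hsign t ht]
    exact iff_of_eq (congrFun h ⟨m, hm⟩)
  refine ⟨A, B, F.image coeffs, ?_, ?_⟩
  · rw [card_image_of_injOn fun s hs t ht h => hinj s hs t ht (by simp only [h]),
      card_filter_powerset_card_le, card_range]
  · intro p hp q hq h
    obtain ⟨s, hs, rfl⟩ := mem_image.1 hp
    obtain ⟨t, ht, rfl⟩ := mem_image.1 hq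
    rw [hinj s hs t ht h]

theorem exists_pos_forall_abs_lt {ι : Type*} [Fintype ι] (S : Finset (ι → ℝ)) :
    ∃ R > 0, ∀ p ∈ S, ∀ i, |p i| < R := by
  refine ⟨1 + ∑ p ∈ S, ‖p‖, by positivity, fun p hp i => ?_⟩
  calc |p i| = ‖p i‖ := (Real.norm_eq_abs _).symm
    _ ≤ ‖p‖ := norm_le_pi_norm p i
    _ ≤ ∑ p ∈ S, ‖p‖ := single_le_sum (fun p _ => norm_nonneg p) hp
    _ < 1 + ∑ p ∈ S, ‖p‖ := lt_one_add _

theorem exists_finset_unitCube_injOn_sign_vector (d M : ℕ) :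
    ∃ (A : ℕ → Fin d → ℝ) (B : ℕ → ℝ) (S : Finset (Fin d → ℝ)),
      #S = ∑ j ∈ range (d + 1), M.choose j ∧ (∀ p ∈ S, ∀ i, p i ∈ Set.Ioo 0 1) ∧
      Set.InjOn (fun p (m : Fin M) => 0 < A m ⬝ᵥ p + B m) S := by
  obtain ⟨A, B, S, hcard, hinj⟩ := exists_finset_injOn_sign_vector d M
  obtain ⟨R, hR, hSR⟩ := exists_pos_forall_abs_lt S
  let φ : (Fin d → ℝ) → Fin d → ℝ := fun p i => (p i / R + 1) / 2
  have hφ_inj : Function.Injective φ := fun p q h => funext fun i => by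
    have := congrFun h i
    simp only [φ] at this
    field_simp at this
    linarith
  have hφ_affine : ∀ m p, (2 * R) • A m ⬝ᵥ φ p + (B m - R * ∑ i, A m i) = A m ⬝ᵥ p + B m := by
    intro m p
    simp only [dotProduct, φ, Pi.smul_apply, smul_eq_mul, mul_sum]
    rw [sum_congr rfl fun i _ => show 2 * R * A m i * ((p i / R + 1) / 2) =
      A m i * p i + R * A m i by field_simp, sum_add_distrib]
    ring
  refine ⟨fun m => (2 * R) • A m, fun m => B m - R * ∑ i, A m i, S.image φ, ?_, ?_, ?_⟩
  · rw [card_image_of_injective S hφ_inj, hcard]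
  · intro q hq i
    obtain ⟨p, hp, rfl⟩ := mem_image.1 hq
    have hlow : -1 < p i / R := by rw [lt_div_iff₀ hR]; linarith [(abs_lt.1 (hSR p hp i)).1]
    have hup : p i / R < 1 := by rw [div_lt_one hR]; exact (abs_lt.1 (hSR p hp i)).2
    constructor <;> simp only [φ] <;> linarith
  · intro p' hp' q' hq' h
    obtain ⟨p, hp, rfl⟩ := mem_image.1 hp'
    obtain ⟨q, hq, rfl⟩ := mem_image.1 hq'
    simp only [hφ_affine] at h
    rw [hinj hp hq h]

noncomputable def sawtoothCoeff (j : ℕ) : ℝ := if j = 0 then 1 else if Even j then 2 else -2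

/-- `zigzag P` maps each interval `[c / P, (c + 1) / P]`, `c < P`, affinely onto `[0, 1]`,
increasingly for even `c` and decreasingly for odd `c`: the coefficients `sawtoothCoeff` make its
slope alternate between `P` and `-P` at the breakpoints `j / P`. `zigzagBranch P c` inverts the
`c`-th piece. -/
noncomputable def zigzag (P : ℕ) (t : ℝ) : ℝ :=
  ∑ j ∈ range P, sawtoothCoeff j * max (P * t - j) 0

noncomputable def zigzagBranch (P c : ℕ) (s : ℝ) : ℝ := (c + if Even c then s else 1 - s) / P

theorem sum_range_sawtoothCoeff_mul (a : ℝ) (c : ℕ) :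
    ∑ j ∈ range (c + 1), sawtoothCoeff j * (a - j) = if Even c then a - c else c + 1 - a := by
  induction c with
  | zero => simp [sawtoothCoeff]
  | succ c ih =>
    rw [sum_range_succ, ih, sawtoothCoeff, if_neg c.succ_ne_zero]
    rcases Nat.even_or_odd c with h | h
    · simp [h, Nat.even_add_one]
      ring
    · simp [Nat.not_even_iff_odd.2 h, Nat.even_add_one]
      ring

theorem zigzag_eq {P c : ℕ} {t : ℝ} (hc : c < P) (ht : P * t ∈ Set.Icc (c : ℝ) (c + 1)) :
    zigzag P t = if Even c then P * t - c else c + 1 - P * t := by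
  rw [zigzag, ← sum_range_sawtoothCoeff_mul, ← sum_subset (range_subset_range.2 hc)]
  · refine sum_congr rfl fun j hj => ?_
    have : (j : ℝ) ≤ c := by exact_mod_cast mem_range_succ_iff.1 hj
    rw [max_eq_left (by linarith [ht.1])]
  · intro j _ hj
    have : (c : ℝ) + 1 ≤ j := by exact_mod_cast not_lt.1 (mt mem_range.2 hj)
    rw [max_eq_right (by linarith [ht.2]), mul_zero]

theorem mul_zigzagBranch {P c : ℕ} (hc : c < P) (s : ℝ) :
    P * zigzagBranch P c s = c + if Even c then s else 1 - s :=
  mul_div_cancel₀ _ (Nat.cast_ne_zero.2 (by omega))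

theorem mul_zigzagBranch_mem_Ioo {P c : ℕ} (hc : c < P) {s : ℝ} (hs : s ∈ Set.Ioo 0 1) :
    P * zigzagBranch P c s ∈ Set.Ioo (c : ℝ) (c + 1) := by
  rw [mul_zigzagBranch hc]
  split_ifs <;> constructor <;> linarith [hs.1, hs.2]

theorem zigzagBranch_mem_Ioo {P c : ℕ} (hc : c < P) {s : ℝ} (hs : s ∈ Set.Ioo 0 1) :
    zigzagBranch P c s ∈ Set.Ioo 0 1 := by
  have h := mul_zigzagBranch_mem_Ioo hc hs
  have hP : (c : ℝ) + 1 ≤ P := by exact_mod_cast hc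
  have hP0 : (0 : ℝ) < P := by linarith [c.cast_nonneg (α := ℝ)]
  constructor
  · exact pos_of_mul_pos_right (by linarith [h.1, c.cast_nonneg (α := ℝ)]) hP0.le
  · exact lt_of_mul_lt_mul_left (by linarith [h.2] : (P : ℝ) * _ < P * 1) hP0.le

theorem zigzag_zigzagBranch {P c : ℕ} (hc : c < P) {s : ℝ} (hs : s ∈ Set.Icc 0 1) :
    zigzag P (zigzagBranch P c s) = s := by
  have h := mul_zigzagBranch hc s
  rw [zigzag_eq hc, h]
  · split_ifs <;> ring
  · rw [h]
    split_ifs <;> constructor <;> linarith [hs.1, hs.2]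

/-- A fold layer of width `N` on `d` coordinates: unit `u` has pre-activation
`P * t (u / P) - u % P`, so that `foldOut` turns its ReLU outputs into `zigzag P` applied to each
coordinate; units with `u / P ≥ d` are never active. -/
def foldIn (d P N : ℕ) : Matrix (Fin N) (Fin d) ℝ :=
  of fun u i => if (u : ℕ) / P = i then (P : ℝ) else 0

def foldBias (P N : ℕ) : Fin N → ℝ := fun u => -(((u : ℕ) % P : ℕ) : ℝ)

noncomputable def foldOut (d P N : ℕ) : Matrix (Fin d) (Fin N) ℝ :=
  of fun i u => if (u : ℕ) / P = i then sawtoothCoeff ((u : ℕ) % P) else 0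

theorem foldIn_mulVec_add_foldBias_apply {d P N : ℕ} (t : Fin d → ℝ) {u : Fin N} {i : Fin d}
    (hu : (u : ℕ) / P = i) :
    (foldIn d P N *ᵥ t + foldBias P N) u = P * t i - ((u : ℕ) % P : ℕ) := by
  simp [foldIn, foldBias, mulVec, dotProduct, hu, Fin.val_inj, sub_eq_add_neg]

theorem foldOut_mulVec_relu {d P N : ℕ} (hP : 0 < P) (hN : d * P ≤ N) (t : Fin d → ℝ) (i : Fin d) :
    (foldOut d P N *ᵥ fun u => max ((foldIn d P N *ᵥ t + foldBias P N) u) 0) i =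
      zigzag P (t i) := by
  let g : ℕ → ℝ := fun j => sawtoothCoeff j * max (P * t i - j) 0
  have hblock : ({u ∈ range N | u / P = i} : Finset ℕ) = Ico (i * P) (i * P + P) := by
    ext u
    simp only [mem_filter, mem_range, mem_Ico, Nat.div_eq_iff hP]
    have := i.2
    constructor
    · omega
    · intro h
      have : (i + 1) * P ≤ d * P := Nat.mul_le_mul_right _ this
      refine ⟨by nlinarith, by omega⟩
  calc (foldOut d P N *ᵥ fun u => max ((foldIn d P N *ᵥ t + foldBias P N) u) 0) i
      = ∑ u : Fin N, if (u : ℕ) / P = i then g ((u : ℕ) % P) else (0 : ℝ) := by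
        simp only [mulVec, dotProduct, foldOut, of_apply]
        refine sum_congr rfl fun u _ => ?_
        split_ifs with hu
        · rw [foldIn_mulVec_add_foldBias_apply t hu]
        · rw [zero_mul]
    _ = ∑ u ∈ range N, if u / P = i then g (u % P) else 0 :=
        Fin.sum_univ_eq_sum_range (fun u => if u / P = i then g (u % P) else 0) N
    _ = ∑ j ∈ range P, g j := by
        rw [← sum_filter, hblock, sum_Ico_eq_sum_range, Nat.add_sub_cancel_left]
        exact sum_congr rfl fun j hj => by
          rw [Nat.mul_add_mod_self_right, Nat.mod_eq_of_lt (mem_range.1 hj)]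

/-- The network of `L + 1` hidden layers: `L` fold layers, with `⌊n (l + 1) / n 0⌋` units per
coordinate in layer `l + 1`, followed by the layer of affine functionals `A u ⬝ᵥ · + B u`.
`foldNetFeature x l ∈ ℝ^{n 0}` is the point represented by hidden layer `l`, read off by
`foldReadout`. -/
noncomputable def foldReadout (n : ℕ → ℕ) : (l : ℕ) → Matrix (Fin (n 0)) (Fin (n l)) ℝ
  | 0 => 1
  | l + 1 => foldOut (n 0) (n (l + 1) / n 0) (n (l + 1))

noncomputable def foldNetW (n : ℕ → ℕ) (L : ℕ) (A : ℕ → Fin (n 0) → ℝ) (l : ℕ) :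
    Matrix (Fin (n (l + 1))) (Fin (n l)) ℝ :=
  (if l < L then foldIn (n 0) (n (l + 1) / n 0) (n (l + 1)) else of fun u => A u) *
    foldReadout n l

def foldNetB (n : ℕ → ℕ) (L : ℕ) (B : ℕ → ℝ) (l : ℕ) : Fin (n (l + 1)) → ℝ :=
  if l < L then foldBias (n (l + 1) / n 0) (n (l + 1)) else fun u => B u

noncomputable def foldNetFeature (n : ℕ → ℕ) (L : ℕ) (A : ℕ → Fin (n 0) → ℝ) (B : ℕ → ℝ)
    (x : Fin (n 0) → ℝ) (l : ℕ) : Fin (n 0) → ℝ :=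
  foldReadout n l *ᵥ reluHidden n (foldNetW n L A) (foldNetB n L B) x l

section FoldNet

variable {n : ℕ → ℕ} {L : ℕ} {A : ℕ → Fin (n 0) → ℝ} {B : ℕ → ℝ}

theorem foldNet_preact_of_lt {l : ℕ} (hl : l < L) (x : Fin (n 0) → ℝ) :
    foldNetW n L A l *ᵥ reluHidden n (foldNetW n L A) (foldNetB n L B) x l + foldNetB n L B l =
      foldIn (n 0) (n (l + 1) / n 0) (n (l + 1)) *ᵥ foldNetFeature n L A B x l +
        foldBias (n (l + 1) / n 0) (n (l + 1)) := by
  rw [foldNetW, foldNetB, if_pos hl, if_pos hl, ← mulVec_mulVec, foldNetFeature]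

theorem foldNet_preact_last_apply (x : Fin (n 0) → ℝ) (u : Fin (n (L + 1))) :
    (foldNetW n L A L *ᵥ reluHidden n (foldNetW n L A) (foldNetB n L B) x L + foldNetB n L B L) u =
      A u ⬝ᵥ foldNetFeature n L A B x L + B u := by
  rw [foldNetW, foldNetB, if_neg (lt_irrefl L), if_neg (lt_irrefl L), ← mulVec_mulVec]
  rfl

theorem foldNetFeature_zero (x : Fin (n 0) → ℝ) : foldNetFeature n L A B x 0 = x :=
  one_mulVec x

theorem foldNetFeature_succ {l : ℕ} (hl : l < L) (hP : 0 < n (l + 1) / n 0)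
    (x : Fin (n 0) → ℝ) (i : Fin (n 0)) :
    foldNetFeature n L A B x (l + 1) i =
      zigzag (n (l + 1) / n 0) (foldNetFeature n L A B x l i) := by
  rw [← foldOut_mulVec_relu hP (Nat.mul_div_le _ _), ← foldNet_preact_of_lt hl]
  rfl

theorem foldNet_reluPattern_fold {l : ℕ} (hl : l < L) (i : Fin (n 0)) {j : ℕ}
    (hj : j < n (l + 1) / n 0) : ∃ u : Fin (n (l + 1)), ∀ x,
      reluPattern n (foldNetW n L A) (foldNetB n L B) (L + 1) x ⟨l, by omega⟩ u ↔
        (j : ℝ) < (n (l + 1) / n 0 : ℕ) * foldNetFeature n L A B x l i := by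
  set P := n (l + 1) / n 0
  have hu : (i : ℕ) * P + j < n (l + 1) := calc
    (i : ℕ) * P + j < (i + 1) * P := by nlinarith
    _ ≤ n 0 * P := Nat.mul_le_mul_right _ i.2
    _ ≤ n (l + 1) := Nat.mul_div_le _ _
  refine ⟨⟨_, hu⟩, fun x => ?_⟩
  have hdiv : ((i : ℕ) * P + j) / P = i := by
    rw [mul_comm, Nat.mul_add_div (by omega), Nat.div_eq_of_lt hj, add_zero]
  have hmod : ((i : ℕ) * P + j) % P = j := by
    rw [Nat.mul_add_mod_self_right, Nat.mod_eq_of_lt hj]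
  simp only [reluPattern]
  rw [foldNet_preact_of_lt hl, foldIn_mulVec_add_foldBias_apply _ hdiv, hmod, sub_pos]

theorem foldNet_reluPattern_last (x : Fin (n 0) → ℝ) (u : Fin (n (L + 1))) :
    reluPattern n (foldNetW n L A) (foldNetB n L B) (L + 1) x (Fin.last L) u ↔
      0 < A u ⬝ᵥ foldNetFeature n L A B x L + B u := by
  simp only [reluPattern, Fin.val_last]
  rw [foldNet_preact_last_apply]

theorem exists_foldNetFeature_eq {c : ℕ → Fin (n 0) → ℕ}
    (hc : ∀ l < L, ∀ i, c l i < n (l + 1) / n 0) :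
    ∀ m ≤ L, ∀ v : Fin (n 0) → ℝ, (∀ i, v i ∈ Set.Ioo 0 1) →
      ∃ x, foldNetFeature n L A B x m = v ∧ ∀ l < m, ∀ i,
        (n (l + 1) / n 0 : ℕ) * foldNetFeature n L A B x l i ∈ Set.Ioo (c l i : ℝ) (c l i + 1)
  | 0, _, v, _ => ⟨v, foldNetFeature_zero v, fun l hl => absurd hl l.not_lt_zero⟩
  | m + 1, hm, v, hv => by
    obtain ⟨x, hx, hcells⟩ := exists_foldNetFeature_eq hc m (by omega)
      (fun i => zigzagBranch (n (m + 1) / n 0) (c m i) (v i))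
      (fun i => zigzagBranch_mem_Ioo (hc m hm i) (hv i))
    refine ⟨x, funext fun i => ?_, fun l hl i => ?_⟩
    · rw [foldNetFeature_succ hm (by have := hc m hm i; omega) x i, hx,
        zigzag_zigzagBranch (hc m hm i) (Set.Ioo_subset_Icc_self (hv i))]
    · rcases Nat.lt_succ_iff_lt_or_eq.1 hl with hl | rfl
      · exact hcells l hl i
      · rw [hx]
        exact mul_zigzagBranch_mem_Ioo (hc l hm i) (hv i)

theorem foldNet_cells_eq_of_reluPattern_eq {c c' : ℕ → Fin (n 0) → ℕ} {x x' : Fin (n 0) → ℝ}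
    (hc : ∀ l < L, ∀ i, c l i < n (l + 1) / n 0) (hc' : ∀ l < L, ∀ i, c' l i < n (l + 1) / n 0)
    (hx : ∀ l < L, ∀ i,
      (n (l + 1) / n 0 : ℕ) * foldNetFeature n L A B x l i ∈ Set.Ioo (c l i : ℝ) (c l i + 1))
    (hx' : ∀ l < L, ∀ i,
      (n (l + 1) / n 0 : ℕ) * foldNetFeature n L A B x' l i ∈ Set.Ioo (c' l i : ℝ) (c' l i + 1))
    (h : reluPattern n (foldNetW n L A) (foldNetB n L B) (L + 1) x =
      reluPattern n (foldNetW n L A) (foldNetB n L B) (L + 1) x') :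
    ∀ l < L, c l = c' l := by
  intro l hl
  funext i
  have hpat : ∀ u : Fin (n (l + 1)),
      reluPattern n (foldNetW n L A) (foldNetB n L B) (L + 1) x ⟨l, by omega⟩ u ↔
        reluPattern n (foldNetW n L A) (foldNetB n L B) (L + 1) x' ⟨l, by omega⟩ u :=
    fun u => iff_of_eq (congrFun (congrFun h ⟨l, by omega⟩) u)
  obtain ⟨u, hu⟩ := foldNet_reluPattern_fold (A := A) (B := B) hl i (hc l hl i)
  obtain ⟨u', hu'⟩ := foldNet_reluPattern_fold (A := A) (B := B) hl i (hc' l hl i)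
  have h1 : (c l i : ℝ) < c' l i + 1 :=
    ((hu x').1 ((hpat u).1 ((hu x).2 (hx l hl i).1))).trans (hx' l hl i).2
  have h2 : (c' l i : ℝ) < c l i + 1 :=
    ((hu' x).1 ((hpat u').2 ((hu' x').2 (hx' l hl i).1))).trans (hx l hl i).2
  have h1' : c l i < c' l i + 1 := by exact_mod_cast h1
  have h2' : c' l i < c l i + 1 := by exact_mod_cast h2
  omega

theorem foldNet_signVector_eq_of_reluPattern_eq {x x' : Fin (n 0) → ℝ}
    (h : reluPattern n (foldNetW n L A) (foldNetB n L B) (L + 1) x =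
      reluPattern n (foldNetW n L A) (foldNetB n L B) (L + 1) x') :
    (fun u : Fin (n (L + 1)) => 0 < A u ⬝ᵥ foldNetFeature n L A B x L + B u) =
      fun u : Fin (n (L + 1)) => 0 < A u ⬝ᵥ foldNetFeature n L A B x' L + B u :=
  funext fun u => propext <| (foldNet_reluPattern_last x u).symm.trans <|
    (iff_of_eq (congrFun (congrFun h (Fin.last L)) u)).trans (foldNet_reluPattern_last x' u)

theorem exists_injective_reluPattern_foldNet {S : Finset (Fin (n 0) → ℝ)}
    (hS_cube : ∀ p ∈ S, ∀ i, p i ∈ Set.Ioo 0 1)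
    (hS_inj : Set.InjOn (fun p (u : Fin (n (L + 1))) => 0 < A u ⬝ᵥ p + B u) S) :
    ∃ ι : ((l : Fin L) → Fin (n 0) → Fin (n (l + 1) / n 0)) × S → Fin (n 0) → ℝ,
      Function.Injective (reluPattern n (foldNetW n L A) (foldNetB n L B) (L + 1) ∘ ι) := by
  let cells (k : ((l : Fin L) → Fin (n 0) → Fin (n (l + 1) / n 0)) × S) : ℕ → Fin (n 0) → ℕ :=
    fun l i => if h : l < L then k.1 ⟨l, h⟩ i else 0
  have hcells : ∀ k, ∀ l < L, ∀ i, cells k l i < n (l + 1) / n 0 := fun k l hl i => by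
    simp only [cells, dif_pos hl]
    exact (k.1 ⟨l, hl⟩ i).2
  choose ι hι_feature hι_cells using fun k =>
    exists_foldNetFeature_eq (A := A) (B := B) (hcells k) L le_rfl k.2 (hS_cube _ k.2.2)
  refine ⟨ι, fun k k' h => Prod.ext (funext fun l => funext fun i => Fin.ext ?_) (Subtype.ext ?_)⟩
  · have := congrFun (foldNet_cells_eq_of_reluPattern_eq (hcells k) (hcells k') (hι_cells k)
      (hι_cells k') h l l.2) i
    simpa only [cells, dif_pos l.2] using this
  · apply hS_inj k.2.2 k'.2.2
    have := foldNet_signVector_eq_of_reluPattern_eq h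
    rwa [hι_feature, hι_feature] at this

end FoldNet

theorem relu_regions_lower_bound_general
    (L : ℕ) (hL : 1 ≤ L) (n : ℕ → ℕ) :
    ∃ (W : (l : ℕ) → Matrix (Fin (n (l + 1))) (Fin (n l)) ℝ)
      (b : (l : ℕ) → Fin (n (l + 1)) → ℝ)
      (_Wout : Matrix (Fin 1) (Fin (n L)) ℝ),
      (∏ l ∈ Finset.Ico 1 L, (n l / n 0) ^ (n 0)) *
          (∑ j ∈ Finset.range (n 0 + 1), (n L).choose j) ≤
        (linearRegions n W b L).ncard := by
  obtain ⟨L, rfl⟩ := Nat.exists_eq_add_of_le' hL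
  obtain ⟨A, B, S, hS_card, hS_cube, hS_inj⟩ :=
    exists_finset_unitCube_injOn_sign_vector (n 0) (n (L + 1))
  obtain ⟨ι, hι⟩ := exists_injective_reluPattern_foldNet hS_cube hS_inj
  refine ⟨foldNetW n L A, foldNetB n L B, 0, ?_⟩
  calc (∏ l ∈ Ico 1 (L + 1), (n l / n 0) ^ n 0) * ∑ j ∈ range (n 0 + 1), (n (L + 1)).choose j
      = Nat.card (((l : Fin L) → Fin (n 0) → Fin (n (l + 1) / n 0)) × S) := by
        simp only [Nat.card_eq_fintype_card, Fintype.card_prod, Fintype.card_pi, Fintype.card_coe,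
          Fintype.card_fin, prod_const, card_univ, hS_card]
        rw [Fin.prod_univ_eq_prod_range (fun l => (n (l + 1) / n 0) ^ n 0), prod_Ico_eq_prod_range,
          Nat.add_sub_cancel]
        simp only [add_comm 1]
    _ ≤ _ := card_le_ncard_linearRegions hι

/-- For `n_0 ≥ 1`, `L ≥ 1` and hidden widths `n_l ≥ n_0` (`1 ≤ l ≤ L`), there is an
`L`-layer ReLU network (with scalar output) whose number of linear regions is at least
`(∏_{l=1}^{L-1} ⌊n_l/n_0⌋^{n_0}) · ∑_{j=0}^{n_0} C(n_L, j)`. -/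
theorem relu_regions_lower_bound
    (L : ℕ) (hL : 1 ≤ L) (n : ℕ → ℕ) (hn0 : 1 ≤ n 0)
    (hwidth : ∀ l, 1 ≤ l → l ≤ L → n 0 ≤ n l) :
    ∃ (W : (l : ℕ) → Matrix (Fin (n (l + 1))) (Fin (n l)) ℝ)
      (b : (l : ℕ) → Fin (n (l + 1)) → ℝ)
      (_Wout : Matrix (Fin 1) (Fin (n L)) ℝ),
      (∏ l ∈ Finset.Ico 1 L, (n l / n 0) ^ (n 0)) *
          (∑ j ∈ Finset.range (n 0 + 1), (n L).choose j) ≤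
        (linearRegions n W b L).ncard :=
  relu_regions_lower_bound_general L hL n
end

section
/- Let n_0 ≥ 1, L ≥ 1, and layer widths n_1,...,n_L with n_l ≥ n_0 for all l. For every L-layer ReLU feedforward network with input dimension n_0 and hidden widths n_1,...,n_L, the number of linear regions is at most ∑_{(j_1,...,j_L) ∈ J} ∏_{l=1}^{L} C(n_l, j_l), where J = {(j_1,...,j_L) ∈ ℤ^L : 0 ≤ j_l ≤ min{n_0, n_1 − j_1, ..., n_{l−1} − j_{l−1}, n_l} for all l = 1,...,L}. -/
open Matrix

/-!
Fix an input `x` and let `D_l` be the image in layer `l` of the set of inputs that share the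
activation pattern of `x` on the first `l` layers. The network is affine on that set, so `D_l` is
convex; its affine dimension is non-increasing in `l`, at most `n_0`, and after layer `l + 1` at
most `n_{l+1} - |S|` whenever the units in `S` are inactive at `x`.

For a convex set `D` of dimension `d` cut by finitely many affine functionals, the sign patterns
realized on `D` can be coded injectively by sets of at most `d` of their inactive indices
(deletion–restriction on the functionals, as in Zaslavsky's count). Coding the pattern of each
layer relative to `D_l` maps the linear regions injectively to tuples `(S_1, …, S_L)` with
`|S_l| ≤ n_0` and `|S_l| ≤ n_m - |S_m|` for `m < l`; counting these tuples by their
cardinalities gives the bound.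
-/

open Finset

section AffineDim

variable (𝕜 : Type*) {V V' : Type*} [Field 𝕜] [AddCommGroup V] [Module 𝕜 V]
  [AddCommGroup V'] [Module 𝕜 V']

noncomputable def affineDim (s : Set V) : ℕ := Module.finrank 𝕜 (vectorSpan 𝕜 s)

variable {𝕜}

lemma vectorSpan_le_ker_of_eqOn {f : V →ᵃ[𝕜] V'} {s : Set V} {c : V'} (h : ∀ x ∈ s, f x = c) :
    vectorSpan 𝕜 s ≤ LinearMap.ker f.linear := by
  rw [vectorSpan_def, Submodule.span_le]
  rintro _ ⟨x, hx, y, hy, rfl⟩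
  rw [SetLike.mem_coe, LinearMap.mem_ker, f.linearMap_vsub, h x hx, h y hy, vsub_self]

variable [FiniteDimensional 𝕜 V]

lemma affineDim_mono {s t : Set V} (h : s ⊆ t) : affineDim 𝕜 s ≤ affineDim 𝕜 t :=
  Submodule.finrank_mono (vectorSpan_mono 𝕜 h)

lemma affineDim_le_finrank (s : Set V) : affineDim 𝕜 s ≤ Module.finrank 𝕜 V :=
  Submodule.finrank_le _

lemma affineDim_image_le (f : V →ᵃ[𝕜] V') (s : Set V) : affineDim 𝕜 (f '' s) ≤ affineDim 𝕜 s := by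
  rw [affineDim, affineDim, ← f.map_vectorSpan]
  exact Submodule.finrank_map_le _ _

lemma affineDim_inter_preimage_zero_lt {D : Set V} (f : V →ᵃ[𝕜] 𝕜) {y z : V} (hy : y ∈ D)
    (hfy : f y ≠ 0) (hz : z ∈ D ∩ f ⁻¹' {0}) : affineDim 𝕜 (D ∩ f ⁻¹' {0}) < affineDim 𝕜 D := by
  refine Submodule.finrank_lt_finrank_of_lt
    (lt_of_le_of_ne (vectorSpan_mono 𝕜 Set.inter_subset_left) fun h => hfy ?_)
  have hyz : y -ᵥ z ∈ vectorSpan 𝕜 (D ∩ f ⁻¹' {0}) := h ▸ vsub_mem_vectorSpan 𝕜 hy hz.1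
  have := vectorSpan_le_ker_of_eqOn (c := (0 : 𝕜)) (fun x hx => hx.2) hyz
  rw [LinearMap.mem_ker, f.linearMap_vsub, hz.2, vsub_eq_sub, sub_zero] at this
  exact this

lemma affineDim_le_card_sub_card {ι : Type*} [Fintype ι] [DecidableEq ι] {s : Set (ι → 𝕜)}
    (S : Finset ι) (h : ∀ v ∈ s, ∀ j ∈ S, v j = 0) :
    affineDim 𝕜 s ≤ Fintype.card ι - #S := by
  set restrict : (ι → 𝕜) →ₗ[𝕜] ((Sᶜ : Finset ι) → 𝕜) := LinearMap.funLeft 𝕜 𝕜 Subtype.val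
  have hvanish : ∀ v ∈ vectorSpan 𝕜 s, ∀ j ∈ S, v j = 0 := by
    intro v hv j hj
    have := vectorSpan_le_ker_of_eqOn (f := (LinearMap.proj j : (ι → 𝕜) →ₗ[𝕜] 𝕜).toAffineMap)
      (c := 0) (fun x hx => h x hx j hj) hv
    simpa using this
  have hinj : Function.Injective (restrict ∘ₗ (vectorSpan 𝕜 s).subtype) := by
    rintro ⟨u, hu⟩ ⟨v, hv⟩ huv
    ext j
    by_cases hj : j ∈ S
    · simp [hvanish u hu j hj, hvanish v hv j hj]
    · exact congrFun huv ⟨j, Finset.mem_compl.2 hj⟩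
  calc affineDim 𝕜 s ≤ Module.finrank 𝕜 ((Sᶜ : Finset ι) → 𝕜) :=
        LinearMap.finrank_le_finrank_of_injective hinj
    _ = Fintype.card ι - #S := by simp

end AffineDim

section SignPatterns

variable {𝕜 V ι : Type*} [Field 𝕜] [LinearOrder 𝕜] [AddCommGroup V] [Module 𝕜 V]

def activeSet (g : ι → V →ᵃ[𝕜] 𝕜) (s : Finset ι) (x : V) : Finset ι :=
  s.filter fun i => 0 < g i x

lemma activeSet_insert_erase [DecidableEq ι] {g : ι → V →ᵃ[𝕜] 𝕜} {s : Finset ι} {a : ι}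
    (ha : a ∉ s) (x : V) : (activeSet g (insert a s) x).erase a = activeSet g s x := by
  ext i
  by_cases hi : i = a <;> simp [activeSet, hi, ha]

variable [IsStrictOrderedRing 𝕜]

lemma convex_setOf_activeSet_eq (g : ι → V →ᵃ[𝕜] 𝕜) (s t : Finset ι) :
    Convex 𝕜 {x | activeSet g s x = t} := by
  intro x hx y hy p q hp hq hpq
  simp only [Set.mem_ofPred_eq] at hx hy ⊢
  rw [← hx]
  refine Finset.filter_congr fun i hi => ?_
  have hxy : 0 < g i x ↔ 0 < g i y := by
    simpa [activeSet, hi] using congrArg (i ∈ ·) (hx.trans hy.symm)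
  rw [Convex.combo_affine_apply hpq, smul_eq_mul, smul_eq_mul]
  by_cases hgx : 0 < g i x
  · have hgy := hxy.1 hgx
    refine iff_of_true ?_ hgx
    rcases hp.eq_or_lt with rfl | hp'
    · simp [(zero_add q).symm.trans hpq, hgy]
    · exact add_pos_of_pos_of_nonneg (mul_pos hp' hgx) (mul_nonneg hq hgy.le)
  · have hgy : g i y ≤ 0 := not_lt.1 (hxy.not.1 hgx)
    exact iff_of_false (by nlinarith) hgx

lemma exists_mem_segment_apply_eq_zero (f : V →ᵃ[𝕜] 𝕜) {x y : V} (hx : f x ≤ 0) (hy : 0 < f y) :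
    ∃ z ∈ segment 𝕜 x y, f z = 0 := by
  have hd : 0 < f y - f x := by linarith
  refine ⟨_, ⟨f y / (f y - f x), -f x / (f y - f x), by positivity,
    div_nonneg (neg_nonneg.2 hx) hd.le, by field_simp; ring, rfl⟩, ?_⟩
  rw [Convex.combo_affine_apply (by field_simp; ring), smul_eq_mul, smul_eq_mul]
  field_simp
  ring

structure IsSignCode [DecidableEq ι] (g : ι → V →ᵃ[𝕜] 𝕜) (s : Finset ι) (D : Set V)
    (Φ : Finset ι → Finset ι) : Prop where
  subset_sdiff : ∀ t ∈ activeSet g s '' D, Φ t ⊆ s \ t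
  card_le : ∀ t ∈ activeSet g s '' D, #(Φ t) ≤ affineDim 𝕜 D
  injOn : Set.InjOn Φ (activeSet g s '' D)

lemma mem_image_activeSet_inter_preimage_zero [FiniteDimensional 𝕜 V] [DecidableEq ι]
    {g : ι → V →ᵃ[𝕜] 𝕜} {s : Finset ι} {a : ι} (ha : a ∉ s) {D : Set V} (hD : Convex 𝕜 D)
    {t : Finset ι} (ht : t ∈ activeSet g (insert a s) '' D) (hat : a ∉ t)
    (ht' : insert a t ∈ activeSet g (insert a s) '' D) :
    t ∈ activeSet g s '' (D ∩ g a ⁻¹' {0}) ∧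
      affineDim 𝕜 (D ∩ g a ⁻¹' {0}) < affineDim 𝕜 D := by
  obtain ⟨x, hxD, rfl⟩ := ht
  obtain ⟨y, hyD, hy⟩ := ht'
  have hgx : g a x ≤ 0 := by simpa [activeSet] using hat
  have hgy : 0 < g a y := by
    have : a ∈ activeSet g (insert a s) y := hy ▸ mem_insert_self a _
    simpa [activeSet] using this
  have hsx : activeSet g s x = activeSet g (insert a s) x := by
    rw [← activeSet_insert_erase ha, erase_eq_of_notMem hat]
  have hsy : activeSet g s y = activeSet g (insert a s) x := by
    rw [← activeSet_insert_erase ha, hy, erase_insert hat]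
  -- the zero of `g a` between `x` and `y` keeps the signs of the other functionals
  obtain ⟨z, hz, hgz⟩ := exists_mem_segment_apply_eq_zero (g a) hgx hgy
  have hzD : z ∈ D ∩ g a ⁻¹' {0} := ⟨hD.segment_subset hxD hyD hz, hgz⟩
  exact ⟨⟨z, hzD, (convex_setOf_activeSet_eq g s _).segment_subset hsx hsy hz⟩,
    affineDim_inter_preimage_zero_lt (g a) hyD hgy.ne' hzD⟩

open Classical in
lemma injOn_ite_insert [DecidableEq ι] {a : ι} {P : Set (Finset ι)} {Φ₀ Φ₁ : Finset ι → Finset ι}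
    (h₀ : Set.InjOn Φ₀ ((·.erase a) '' P)) (h₀a : ∀ t ∈ P, a ∉ Φ₀ (t.erase a))
    (h₁ : Set.InjOn Φ₁ {t ∈ P | a ∉ t ∧ insert a t ∈ P})
    (h₁a : ∀ t ∈ {t ∈ P | a ∉ t ∧ insert a t ∈ P}, a ∉ Φ₁ t) :
    Set.InjOn (fun t => if a ∉ t ∧ insert a t ∈ P then insert a (Φ₁ t) else Φ₀ (t.erase a)) P := by
  intro t ht u hu h
  dsimp only at h
  split_ifs at h with htQ huQ huQ
  · refine h₁ ⟨ht, htQ⟩ ⟨hu, huQ⟩ ?_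
    simpa [erase_insert (h₁a t ⟨ht, htQ⟩), erase_insert (h₁a u ⟨hu, huQ⟩)]
      using congrArg (·.erase a) h
  · exact absurd (h ▸ mem_insert_self a _) (h₀a u hu)
  · exact absurd (h.symm ▸ mem_insert_self a _) (h₀a t ht)
  · have he : t.erase a = u.erase a := h₀ ⟨t, ht, rfl⟩ ⟨u, hu, rfl⟩ h
    by_cases hat : a ∈ t <;> by_cases hau : a ∈ u
    · rw [← insert_erase hat, ← insert_erase hau, he]
    · rw [erase_eq_of_notMem hau] at he
      exact absurd ⟨hau, by rwa [← he, insert_erase hat]⟩ huQ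
    · rw [erase_eq_of_notMem hat] at he
      exact absurd ⟨hat, by rwa [he, insert_erase hau]⟩ htQ
    · rwa [erase_eq_of_notMem hat, erase_eq_of_notMem hau] at he

theorem exists_isSignCode [FiniteDimensional 𝕜 V] [DecidableEq ι] (g : ι → V →ᵃ[𝕜] 𝕜)
    (s : Finset ι) {D : Set V} (hD : Convex 𝕜 D) : ∃ Φ, IsSignCode g s D Φ := by
  classical
  induction s using Finset.induction_on generalizing D with
  | empty =>
    refine ⟨fun _ => ∅, fun _ _ => by simp, fun _ _ => by simp, ?_⟩
    rintro _ ⟨x, -, rfl⟩ _ ⟨y, -, rfl⟩ -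
    simp [activeSet]
  | insert a s ha ih =>
    obtain ⟨Φ₀, h₀⟩ := ih hD
    obtain ⟨Φ₁, h₁⟩ := ih (hD.inter ((convex_singleton 0).affine_preimage (g a)))
    set P := activeSet g (insert a s) '' D
    -- `a` enters the code of `t` exactly when flipping `a` in `t` gives another realized pattern;
    -- then `t` is realized on the hyperplane `g a = 0`, whose dimension is smaller
    have herase : ∀ t ∈ P, t.erase a ∈ activeSet g s '' D := by
      rintro _ ⟨x, hx, rfl⟩
      exact ⟨x, hx, (activeSet_insert_erase ha x).symm⟩
    have hstep (t : Finset ι) (ht : t ∈ P) (hQ : a ∉ t ∧ insert a t ∈ P) :=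
      mem_image_activeSet_inter_preimage_zero ha hD ht hQ.1 hQ.2
    refine ⟨fun t => if a ∉ t ∧ insert a t ∈ P then insert a (Φ₁ t) else Φ₀ (t.erase a),
      fun t ht => ?_, fun t ht => ?_, injOn_ite_insert (h₀.injOn.mono ?_) ?_ (h₁.injOn.mono ?_) ?_⟩
    · split_ifs with hQ
      · refine insert_subset (by simp [hQ.1]) ((h₁.subset_sdiff t (hstep t ht hQ).1).trans ?_)
        exact sdiff_subset_sdiff (subset_insert a s) le_rfl
      · refine (h₀.subset_sdiff _ (herase t ht)).trans fun i hi => ?_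
        simp only [mem_sdiff, mem_erase, mem_insert, not_and] at hi ⊢
        exact ⟨Or.inr hi.1, fun hit => hi.2 (fun hia => ha (hia ▸ hi.1)) hit⟩
    · split_ifs with hQ
      · obtain ⟨ht₁, hlt⟩ := hstep t ht hQ
        have := h₁.card_le t ht₁
        exact (card_insert_le _ _).trans (by omega)
      · exact h₀.card_le _ (herase t ht)
    · rintro _ ⟨t, ht, rfl⟩
      exact herase t ht
    · exact fun t ht hat => ha (mem_sdiff.1 (h₀.subset_sdiff _ (herase t ht) hat)).1
    · exact fun t ⟨ht, hQ⟩ => (hstep t ht hQ).1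
    · exact fun t ⟨ht, hQ⟩ hat => ha (mem_sdiff.1 (h₁.subset_sdiff t (hstep t ht hQ).1 hat)).1

open Classical in
noncomputable def signCode [DecidableEq ι] (g : ι → V →ᵃ[𝕜] 𝕜) (s : Finset ι) (D : Set V) :
    Finset ι → Finset ι :=
  Classical.epsilon (IsSignCode g s D)

lemma isSignCode_signCode [FiniteDimensional 𝕜 V] [DecidableEq ι] (g : ι → V →ᵃ[𝕜] 𝕜)
    (s : Finset ι) {D : Set V} (hD : Convex 𝕜 D) : IsSignCode g s D (signCode g s D) :=
  Classical.epsilon_spec (exists_isSignCode g s hD)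

end SignPatterns

lemma card_filter_card_eq_sum_prod_choose {ι : Type*} [Fintype ι] [DecidableEq ι] (m : ι → ℕ)
    (P : (ι → ℕ) → Prop) [DecidablePred P] :
    #{S : (i : ι) → Finset (Fin (m i)) | P fun i => #(S i)} =
      ∑ j ∈ {j : (i : ι) → Fin (m i + 1) | P fun i => j i}, ∏ i, (m i).choose (j i) := by
  let cards (S : (i : ι) → Finset (Fin (m i))) (i : ι) : Fin (m i + 1) :=
    ⟨#(S i), Nat.lt_succ_of_le (card_le_univ (S i) |>.trans_eq (Fintype.card_fin _))⟩
  rw [card_eq_sum_card_fiberwise (f := cards) (t := {j : (i : ι) → Fin (m i + 1) | P fun i => j i})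
    fun S hS => by simpa [cards] using hS]
  refine sum_congr rfl fun j hj => ?_
  have hfiber : ({S ∈ {S | P fun i => #(S i)} | cards S = j} :
      Finset ((i : ι) → Finset (Fin (m i)))) =
      Fintype.piFinset fun i => powersetCard (j i) univ := by
    ext S
    simp only [mem_filter, mem_univ, true_and] at hj
    simp only [mem_filter, mem_univ, true_and, Fintype.mem_piFinset, mem_powersetCard,
      subset_univ, funext_iff, Fin.ext_iff, cards]
    exact ⟨fun h => h.2, fun h => ⟨by simpa [h] using hj, h⟩⟩
  rw [hfiber, Fintype.card_piFinset]
  simp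

lemma Set.ncard_range_le_ncard_range {α β γ : Type*} [Nonempty α] {f : α → β} {g : α → γ}
    (hg : (Set.range g).Finite) (h : ∀ x y, g x = g y → f x = f y) :
    (Set.range f).ncard ≤ (Set.range g).ncard := by
  have hf : Set.range f = (f ∘ Function.invFun g) '' Set.range g := by
    rw [← Set.range_comp, Function.comp_assoc]
    exact congrArg Set.range (funext fun x => h _ _ (Function.invFun_eq ⟨x, rfl⟩) |>.symm)
  rw [hf]
  exact Set.ncard_image_le hg

section Network

variable {n : ℕ → ℕ} (W : (l : ℕ) → Matrix (Fin (n (l + 1))) (Fin (n l)) ℝ)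
  (b : (l : ℕ) → Fin (n (l + 1)) → ℝ)

noncomputable def preactivationMap (l : ℕ) : (Fin (n l) → ℝ) →ᵃ[ℝ] (Fin (n (l + 1)) → ℝ) :=
  (W l).mulVecLin.toAffineMap + AffineMap.const ℝ _ (b l)

noncomputable def maskedLayerMap (l : ℕ) (t : Finset (Fin (n (l + 1)))) :
    (Fin (n l) → ℝ) →ᵃ[ℝ] (Fin (n (l + 1)) → ℝ) :=
  (LinearMap.mulLeft ℝ ((t : Set (Fin (n (l + 1)))).indicator 1)).toAffineMap.comp
    (preactivationMap W b l)

noncomputable def unitFunctionals (l : ℕ) (j : Fin (n (l + 1))) : (Fin (n l) → ℝ) →ᵃ[ℝ] ℝ :=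
  (AffineMap.proj j).comp (preactivationMap W b l)

noncomputable def activeUnits (l : ℕ) (x : Fin (n 0) → ℝ) : Finset (Fin (n (l + 1))) :=
  activeSet (unitFunctionals W b l) univ (reluHidden n W b x l)

def activationCell (l : ℕ) (x : Fin (n 0) → ℝ) : Set (Fin (n 0) → ℝ) :=
  {y | ∀ k < l, activeUnits W b k y = activeUnits W b k x}

def hiddenImage (l : ℕ) (x : Fin (n 0) → ℝ) : Set (Fin (n l) → ℝ) :=
  (reluHidden n W b · l) '' activationCell W b l x

noncomputable def unitCode (l : ℕ) (x : Fin (n 0) → ℝ) : Finset (Fin (n (l + 1))) :=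
  signCode (unitFunctionals W b l) univ (hiddenImage W b l x) (activeUnits W b l x)

variable {W b}

lemma mem_activationCell_self (l : ℕ) (x : Fin (n 0) → ℝ) : x ∈ activationCell W b l x :=
  fun _ _ => rfl

lemma activationCell_succ (l : ℕ) (x : Fin (n 0) → ℝ) :
    activationCell W b (l + 1) x =
      activationCell W b l x ∩ {y | activeUnits W b l y = activeUnits W b l x} := by
  ext y
  simp only [activationCell, Set.mem_inter_iff, Set.mem_ofPred_eq, Nat.lt_succ_iff_lt_or_eq, or_imp,
    forall_and, forall_eq]

lemma reluHidden_succ_eq_maskedLayerMap {l : ℕ} {y : Fin (n 0) → ℝ}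
    {t : Finset (Fin (n (l + 1)))} (hy : activeUnits W b l y = t) :
    reluHidden n W b y (l + 1) = maskedLayerMap W b l t (reluHidden n W b y l) := by
  funext j
  set p := preactivationMap W b l (reluHidden n W b y l)
  have hj : j ∈ t ↔ 0 < p j := by
    rw [← hy, activeUnits, activeSet, mem_filter]
    simp [unitFunctionals, p]
  change max (p j) 0 = (t : Set (Fin (n (l + 1)))).indicator 1 j * p j
  by_cases hpos : 0 < p j
  · simp [hj.2 hpos, hpos.le]
  · simp [mt hj.1 hpos, not_lt.1 hpos]

lemma exists_affineMap_eqOn_activationCell (l : ℕ) (x : Fin (n 0) → ℝ) :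
    Convex ℝ (activationCell W b l x) ∧ ∃ φ : (Fin (n 0) → ℝ) →ᵃ[ℝ] (Fin (n l) → ℝ),
      Set.EqOn (reluHidden n W b · l) φ (activationCell W b l x) := by
  induction l with
  | zero => exact ⟨by simpa [activationCell] using convex_univ, AffineMap.id ℝ _, fun _ _ => rfl⟩
  | succ l ih =>
    obtain ⟨hconv, φ, hφ⟩ := ih
    have hcell : activationCell W b (l + 1) x = activationCell W b l x ∩
        {y | activeSet (fun j => (unitFunctionals W b l j).comp φ) univ y =
          activeUnits W b l x} := by
      rw [activationCell_succ]
      ext y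
      simp only [Set.mem_inter_iff, Set.mem_ofPred_eq]
      refine and_congr_right fun hy => ?_
      rw [activeUnits, show reluHidden n W b y l = φ y from hφ hy]
      rfl
    refine ⟨hcell ▸ hconv.inter (convex_setOf_activeSet_eq _ _ _),
      (maskedLayerMap W b l (activeUnits W b l x)).comp φ, fun y hy => ?_⟩
    rw [activationCell_succ] at hy
    simp [reluHidden_succ_eq_maskedLayerMap hy.2, hφ hy.1]

lemma convex_activationCell (l : ℕ) (x : Fin (n 0) → ℝ) : Convex ℝ (activationCell W b l x) :=
  (exists_affineMap_eqOn_activationCell l x).1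

lemma convex_hiddenImage (l : ℕ) (x : Fin (n 0) → ℝ) : Convex ℝ (hiddenImage W b l x) := by
  obtain ⟨hconv, φ, hφ⟩ := exists_affineMap_eqOn_activationCell (W := W) (b := b) l x
  rw [hiddenImage, hφ.image_eq]
  exact hconv.affine_image φ

lemma hiddenImage_succ_subset (l : ℕ) (x : Fin (n 0) → ℝ) :
    hiddenImage W b (l + 1) x ⊆
      maskedLayerMap W b l (activeUnits W b l x) '' hiddenImage W b l x := by
  rintro _ ⟨y, hy, rfl⟩
  rw [activationCell_succ] at hy
  exact ⟨_, ⟨y, hy.1, rfl⟩, (reluHidden_succ_eq_maskedLayerMap hy.2).symm⟩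

lemma antitone_affineDim_hiddenImage (x : Fin (n 0) → ℝ) :
    Antitone fun l => affineDim ℝ (hiddenImage W b l x) :=
  antitone_nat_of_succ_le fun l =>
    (affineDim_mono (hiddenImage_succ_subset l x)).trans (affineDim_image_le _ _)

lemma affineDim_hiddenImage_le (l : ℕ) (x : Fin (n 0) → ℝ) :
    affineDim ℝ (hiddenImage W b l x) ≤ n 0 :=
  (antitone_affineDim_hiddenImage x (Nat.zero_le l)).trans
    ((affineDim_le_finrank _).trans_eq (Module.finrank_fin_fun ℝ))

lemma affineDim_hiddenImage_succ_le {l : ℕ} {x : Fin (n 0) → ℝ} {S : Finset (Fin (n (l + 1)))}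
    (hS : S ⊆ univ \ activeUnits W b l x) :
    affineDim ℝ (hiddenImage W b (l + 1) x) ≤ n (l + 1) - #S := by
  refine (affineDim_le_card_sub_card S ?_).trans_eq (by rw [Fintype.card_fin])
  rintro _ ⟨y, hy, rfl⟩ j hj
  rw [activationCell_succ] at hy
  simp [reluHidden_succ_eq_maskedLayerMap hy.2, maskedLayerMap, (mem_sdiff.1 (hS hj)).2]

lemma isSignCode_hiddenImage (l : ℕ) (x : Fin (n 0) → ℝ) :
    IsSignCode (unitFunctionals W b l) univ (hiddenImage W b l x)
      (signCode (unitFunctionals W b l) univ (hiddenImage W b l x)) :=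
  isSignCode_signCode _ _ (convex_hiddenImage l x)

lemma activeUnits_mem_image (l : ℕ) (x : Fin (n 0) → ℝ) :
    activeUnits W b l x ∈ activeSet (unitFunctionals W b l) univ '' hiddenImage W b l x :=
  ⟨_, ⟨x, mem_activationCell_self l x, rfl⟩, rfl⟩

lemma card_unitCode_le_sub {k l : ℕ} (hkl : k < l) (x : Fin (n 0) → ℝ) :
    #(unitCode W b l x) ≤ n (k + 1) - #(unitCode W b k x) :=
  calc #(unitCode W b l x) ≤ affineDim ℝ (hiddenImage W b l x) :=
        (isSignCode_hiddenImage l x).card_le _ (activeUnits_mem_image l x)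
    _ ≤ affineDim ℝ (hiddenImage W b (k + 1) x) := antitone_affineDim_hiddenImage x hkl
    _ ≤ n (k + 1) - #(unitCode W b k x) := affineDim_hiddenImage_succ_le
        ((isSignCode_hiddenImage k x).subset_sdiff _ (activeUnits_mem_image k x))

lemma card_unitCode_le (l : ℕ) (x : Fin (n 0) → ℝ) : #(unitCode W b l x) ≤ n 0 :=
  ((isSignCode_hiddenImage l x).card_le _ (activeUnits_mem_image l x)).trans
    (affineDim_hiddenImage_le l x)

lemma activationCell_eq_of_unitCode_eq {l : ℕ} {x y : Fin (n 0) → ℝ}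
    (h : ∀ k < l, unitCode W b k x = unitCode W b k y) :
    activationCell W b l x = activationCell W b l y := by
  induction l with
  | zero => simp [activationCell]
  | succ l ih =>
    have hcell := ih fun k hk => h k (Nat.lt_succ_of_lt hk)
    have hD : hiddenImage W b l x = hiddenImage W b l y := by rw [hiddenImage, hiddenImage, hcell]
    have hcode := h l (Nat.lt_succ_self l)
    rw [unitCode, unitCode, ← hD] at hcode
    have hact : activeUnits W b l x = activeUnits W b l y :=
      (isSignCode_hiddenImage l x).injOn (activeUnits_mem_image l x)
        (hD ▸ activeUnits_mem_image l y) hcode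
    rw [activationCell_succ, activationCell_succ, hcell, hact]

lemma activeUnits_eq_iff {l : ℕ} {x y : Fin (n 0) → ℝ} :
    activeUnits W b l y = activeUnits W b l x ↔
      ∀ j, 0 < ((W l) *ᵥ reluHidden n W b y l + b l) j ↔
        0 < ((W l) *ᵥ reluHidden n W b x l + b l) j := by
  simp only [activeUnits, activeSet, Finset.ext_iff, mem_filter, mem_univ, true_and]
  rfl

lemma setOf_reluPattern_eq (L : ℕ) (x : Fin (n 0) → ℝ) :
    {y | reluPattern n W b L y = reluPattern n W b L x} = activationCell W b L x := by
  ext y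
  simp only [Set.mem_ofPred_eq, activationCell, activeUnits_eq_iff]
  constructor
  · exact fun h k hk j => (congrFun (congrFun h ⟨k, hk⟩) j).to_iff
  · exact fun h => funext fun l => funext fun j => propext (h l l.2 j)

lemma linearRegions_eq_range (L : ℕ) :
    linearRegions n W b L = Set.range (activationCell W b L) := by
  ext R
  simp only [linearRegions, Set.mem_ofPred_eq, Set.mem_range]
  refine exists_congr fun x => ?_
  rw [setOf_reluPattern_eq, (convex_activationCell L x).isPreconnected.connectedComponentIn
    (mem_activationCell_self L x), eq_comm]

end Network

open Classical in
/-- Here `j l` plays the role of `j_{l+1}`, and the bounds `0 ≤ j_l ≤ n_l` are built into the type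
`Fin (n_l + 1)`. -/
theorem relu_regions_upper_bound_general
    (L : ℕ) (n : ℕ → ℕ)
    (W : (l : ℕ) → Matrix (Fin (n (l + 1))) (Fin (n l)) ℝ)
    (b : (l : ℕ) → Fin (n (l + 1)) → ℝ) :
    (linearRegions n W b L).ncard ≤
      ∑ j ∈ (Finset.univ : Finset ((l : Fin L) → Fin (n (l.1 + 1) + 1))).filter
          (fun j => ∀ l : Fin L, (j l : ℕ) ≤ n 0 ∧
            ∀ m : Fin L, m < l → (j l : ℕ) ≤ n (m.1 + 1) - (j m : ℕ)),
        ∏ l : Fin L, (n (l.1 + 1)).choose (j l : ℕ) := by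
  let code (x : Fin (n 0) → ℝ) (l : Fin L) : Finset (Fin (n (l.1 + 1))) := unitCode W b l x
  let Admissible (c : Fin L → ℕ) : Prop := ∀ l, c l ≤ n 0 ∧ ∀ m < l, c l ≤ n (m.1 + 1) - c m
  let codes : Finset ((l : Fin L) → Finset (Fin (n (l.1 + 1)))) := {S | Admissible fun l => #(S l)}
  have hcode : Set.range code ⊆ codes := by
    rintro _ ⟨x, rfl⟩
    simp only [codes, coe_filter, mem_univ, true_and, Set.mem_ofPred_eq]
    exact fun l => ⟨card_unitCode_le l x, fun m hm => card_unitCode_le_sub hm x⟩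
  calc (linearRegions n W b L).ncard = (Set.range (activationCell W b L)).ncard := by
        rw [linearRegions_eq_range]
    _ ≤ (Set.range code).ncard :=
        Set.ncard_range_le_ncard_range (Set.toFinite _)
          fun x y h => activationCell_eq_of_unitCode_eq fun k hk => congrFun h ⟨k, hk⟩
    _ ≤ #codes :=
        (Set.ncard_le_ncard hcode).trans_eq (Set.ncard_coe_finset _)
    _ = _ := card_filter_card_eq_sum_prod_choose (fun l : Fin L => n (l.1 + 1)) Admissible

open Classical in
/-- For `n_0 ≥ 1`, `L ≥ 1` and hidden widths `n_l ≥ n_0`, every `L`-layer ReLU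
network has at most `∑_{(j_1,…,j_L) ∈ J} ∏_{l=1}^L C(n_l, j_l)` linear regions, where
`J = {(j_1,…,j_L) ∈ ℤ^L : 0 ≤ j_l ≤ min{n_0, n_1 − j_1, …, n_{l−1} − j_{l−1}, n_l}}`.
(Here `j` is indexed by `l : Fin L`, with `j l` playing the role of `j_{l+1}`, and the bounds
`0 ≤ j_l ≤ n_l` are built into the type `Fin (n_l + 1)`.) -/
theorem relu_regions_upper_bound
    (L : ℕ) (hL : 1 ≤ L) (n : ℕ → ℕ) (hn0 : 1 ≤ n 0)
    (hwidth : ∀ l, 1 ≤ l → l ≤ L → n 0 ≤ n l)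
    (W : (l : ℕ) → Matrix (Fin (n (l + 1))) (Fin (n l)) ℝ)
    (b : (l : ℕ) → Fin (n (l + 1)) → ℝ) :
    (linearRegions n W b L).ncard ≤
      ∑ j ∈ (Finset.univ : Finset ((l : Fin L) → Fin (n (l.1 + 1) + 1))).filter
          (fun j => ∀ l : Fin L, (j l : ℕ) ≤ n 0 ∧
            ∀ m : Fin L, m < l → (j l : ℕ) ≤ n (m.1 + 1) - (j m : ℕ)),
        ∏ l : Fin L, (n (l.1 + 1)).choose (j l : ℕ) :=
  relu_regions_upper_bound_general L n W b
end

section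
/- An arrangement of n hyperplanes in ℝ^d partitions ℝ^d into at most ∑_{j=0}^{d} C(n, j) regions; that is, the complement in ℝ^d of the union of n affine hyperplanes has at most ∑_{j=0}^{d} C(n, j) connected components. Consequently, a single-hidden-layer ReLU network with input dimension n_0 and n_1 hidden units has at most ∑_{j=0}^{n_0} C(n_1, j) linear regions. -/
/-!
Two points with the same sign pattern with respect to the affine functions cutting out the
hyperplanes lie in a common convex, hence connected, cell; so there are at most as many regions as
realised sign patterns, and the same holds for the linear regions of the network. To count the
sign patterns of `n` affine functions on a `d`-dimensional space, split off the last function `h`.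
A pattern of the remaining functions realised on both sides of `{h = 0}` is, by convexity of its
cell, also realised on `{h = 0}`, an affine copy of a `(d - 1)`-dimensional space. Hence
`B(n, d) ≤ B(n - 1, d) + B(n - 1, d - 1)`, which Pascal's rule solves by `∑_{j ≤ d} C(n, j)`.
-/

open Matrix Set

theorem Set.ncard_image_le_ncard_image_of_eq_imp_eq {α β γ : Type*} {s : Set α} {f : α → β}
    {g : α → γ} (hg : (g '' s).Finite) (hfg : ∀ x ∈ s, ∀ y ∈ s, g x = g y → f x = f y) :
    (f '' s).ncard ≤ (g '' s).ncard := by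
  rcases isEmpty_or_nonempty α with hα | hα
  · simp [eq_empty_of_isEmpty s]
  refine ncard_le_ncard_of_injOn (g ∘ Function.invFunOn f s) ?_ ?_ hg
  · rintro _ ⟨x, hx, rfl⟩
    exact mem_image_of_mem g (Function.invFunOn_pos ⟨x, hx, rfl⟩).1
  · rintro _ ⟨x, hx, rfl⟩ _ ⟨y, hy, rfl⟩ hxy
    obtain ⟨hx', hfx⟩ := Function.invFunOn_pos (⟨x, hx, rfl⟩ : ∃ a ∈ s, f a = f x)
    obtain ⟨hy', hfy⟩ := Function.invFunOn_pos (⟨y, hy, rfl⟩ : ∃ a ∈ s, f a = f y)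
    rw [← hfx, ← hfy]
    exact hfg _ hx' _ hy' hxy

theorem Finset.sum_range_choose_add_sum_range_choose (n m : ℕ) :
    ∑ j ∈ range (m + 1), n.choose j + ∑ j ∈ range m, n.choose j =
      ∑ j ∈ range (m + 1), (n + 1).choose j := by
  induction m with
  | zero => simp
  | succ m ih =>
    rw [sum_range_succ _ (m + 1), sum_range_succ _ (m + 1), ← ih, Nat.choose_succ_succ',
      sum_range_succ _ m]
    ring

section SignPattern

variable {ι V : Type*} [AddCommGroup V] [Module ℝ V]

def signPattern (f : ι → V →ᵃ[ℝ] ℝ) (y : V) : ι → Prop := fun i => 0 < f i y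

theorem convex_setOf_forall_apply_mem (f : ι → V →ᵃ[ℝ] ℝ) {s : ι → Set ℝ}
    (hs : ∀ i, Convex ℝ (s i)) : Convex ℝ {y | ∀ i, f i y ∈ s i} := by
  have h : {y | ∀ i, f i y ∈ s i} = ⋂ i, f i ⁻¹' s i := by ext; simp
  rw [h]
  exact convex_iInter fun i => (hs i).affine_preimage (f i)

theorem convex_setOf_signPattern_eq (f : ι → V →ᵃ[ℝ] ℝ) (q : ι → Prop) :
    Convex ℝ {y | signPattern f y = q} := by
  simp only [signPattern, funext_iff, eq_iff_iff]
  refine convex_setOf_forall_apply_mem f (s := fun i => {t | 0 < t ↔ q i}) fun i => ?_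
  by_cases hq : q i
  · rw [show {t : ℝ | 0 < t ↔ q i} = Ioi 0 by ext; simp [hq]]
    exact convex_Ioi 0
  · rw [show {t : ℝ | 0 < t ↔ q i} = Iic 0 by ext; simp [hq]]
    exact convex_Iic 0

theorem convex_setOf_forall_ne_zero_and_signPattern_eq (f : ι → V →ᵃ[ℝ] ℝ) (q : ι → Prop) :
    Convex ℝ {y | (∀ i, f i y ≠ 0) ∧ signPattern f y = q} := by
  simp only [signPattern, funext_iff, eq_iff_iff, ← forall_and]
  refine convex_setOf_forall_apply_mem f (s := fun i => {t | t ≠ 0 ∧ (0 < t ↔ q i)})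
    fun i => ?_
  by_cases hq : q i
  · rw [show {t : ℝ | t ≠ 0 ∧ (0 < t ↔ q i)} = Ioi 0 by ext; simpa [hq] using ne_of_gt]
    exact convex_Ioi 0
  · rw [show {t : ℝ | t ≠ 0 ∧ (0 < t ↔ q i)} = Iio 0 by
      ext t
      simp only [mem_ofPred_eq, hq, iff_false, not_lt, mem_Iio]
      exact ⟨fun h => lt_of_le_of_ne h.2 h.1, fun h => ⟨h.ne, h.le⟩⟩]
    exact convex_Iio 0

theorem Convex.exists_mem_apply_eq_zero {s : Set V} (hs : Convex ℝ s) (h : V →ᵃ[ℝ] ℝ) {y₁ y₂ : V}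
    (hy₁ : y₁ ∈ s) (hy₂ : y₂ ∈ s) (h₁ : 0 ≤ h y₁) (h₂ : h y₂ ≤ 0) : ∃ y ∈ s, h y = 0 :=
  (hs.affine_image h).ordConnected.out (mem_image_of_mem h hy₂) (mem_image_of_mem h hy₁) ⟨h₂, h₁⟩

theorem image_signPattern_inter_subset (f : ι → V →ᵃ[ℝ] ℝ) (h : V →ᵃ[ℝ] ℝ) :
    signPattern f '' {y | 0 < h y} ∩ signPattern f '' {y | ¬0 < h y} ⊆
      signPattern f '' {y | h y = 0} := by
  rintro q ⟨⟨y₁, h₁, rfl⟩, ⟨y₂, h₂, hq⟩⟩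
  obtain ⟨y, hy, hy0⟩ := (convex_setOf_signPattern_eq f (signPattern f y₁)).exists_mem_apply_eq_zero
    h rfl hq (le_of_lt h₁) (not_lt.mp h₂)
  exact ⟨y, hy0, hy⟩

theorem AffineMap.exists_range_eq_setOf_apply_eq_zero [FiniteDimensional ℝ V] (h : V →ᵃ[ℝ] ℝ)
    (hh : h.linear ≠ 0) : ∃ (K : Submodule ℝ V) (e : K →ᵃ[ℝ] V),
      Module.finrank ℝ K + 1 = Module.finrank ℝ V ∧ range e = {y | h y = 0} := by
  obtain ⟨y₀, hy₀⟩ := LinearMap.surjective hh (-h 0)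
  have hzero : h y₀ = 0 := by rw [h.decomp]; simp [hy₀]
  refine ⟨LinearMap.ker h.linear,
    (LinearMap.ker h.linear).subtype.toAffineMap + AffineMap.const ℝ _ y₀,
    Module.Dual.finrank_ker_add_one_of_ne_zero hh, ?_⟩
  ext y
  constructor
  · rintro ⟨⟨z, hz⟩, rfl⟩
    rw [LinearMap.mem_ker] at hz
    simp [← vadd_eq_add, h.map_vadd, hz, hzero]
  · intro hy
    refine ⟨⟨y - y₀, ?_⟩, by simp⟩
    rw [LinearMap.mem_ker, ← vsub_eq_sub, h.linearMap_vsub, hy.out, hzero, vsub_self]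

theorem ncard_range_le_ncard_range_init_add_ncard_inter {X : Type*} {n : ℕ}
    (P : X → Fin (n + 1) → Prop) :
    (range P).ncard ≤ (range fun x => Fin.init (P x)).ncard +
      ((fun x => Fin.init (P x)) '' {x | P x (Fin.last n)} ∩
        (fun x => Fin.init (P x)) '' {x | ¬P x (Fin.last n)}).ncard := by
  set T := (fun x => Fin.init (P x)) '' {x | P x (Fin.last n)}
  set F := (fun x => Fin.init (P x)) '' {x | ¬P x (Fin.last n)}
  have hsub : range P ⊆ (fun q => Fin.snoc q True) '' T ∪ (fun q => Fin.snoc q False) '' F := by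
    rintro _ ⟨x, rfl⟩
    by_cases hx : P x (Fin.last n)
    · exact Or.inl ⟨_, ⟨x, hx, rfl⟩, by simpa [hx] using Fin.snoc_init_self (P x)⟩
    · exact Or.inr ⟨_, ⟨x, hx, rfl⟩, by simpa [hx] using Fin.snoc_init_self (P x)⟩
  calc (range P).ncard
      ≤ T.ncard + F.ncard :=
        (ncard_le_ncard hsub).trans ((ncard_union_le _ _).trans
          (add_le_add (ncard_image_le) (ncard_image_le)))
    _ = (T ∪ F).ncard + (T ∩ F).ncard := (ncard_union_add_ncard_inter T F).symm
    _ ≤ _ := by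
      gcongr
      · exact toFinite _
      · rintro _ (⟨x, -, rfl⟩ | ⟨x, -, rfl⟩) <;> exact mem_range_self x

theorem ncard_range_signPattern_le [FiniteDimensional ℝ V] {n : ℕ} (f : Fin n → V →ᵃ[ℝ] ℝ) :
    (range (signPattern f)).ncard ≤ ∑ j ∈ Finset.range (Module.finrank ℝ V + 1), n.choose j := by
  induction n generalizing V with
  | zero =>
    exact (ncard_le_one_of_subsingleton _).trans <|
      Finset.single_le_sum (f := fun j => Nat.choose 0 j) (fun j _ => Nat.zero_le _)
        (Finset.mem_range.2 (Nat.succ_pos _))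
  | succ n ih =>
    set h := f (Fin.last n)
    have hsplit := ncard_range_le_ncard_range_init_add_ncard_inter (signPattern f)
    change _ ≤ (range (signPattern (Fin.init f))).ncard +
      (signPattern (Fin.init f) '' {y | 0 < h y} ∩
        signPattern (Fin.init f) '' {y | ¬0 < h y}).ncard at hsplit
    have hinit := ih (Fin.init f)
    by_cases hh : h.linear = 0
    · have hempty : signPattern (Fin.init f) '' {y | 0 < h y} ∩
          signPattern (Fin.init f) '' {y | ¬0 < h y} = ∅ := by
        have hconst : ∀ y, h y = h 0 := fun y => by rw [h.decomp, hh]; simp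
        rw [eq_empty_iff_forall_notMem]
        rintro _ ⟨⟨y₁, h₁, -⟩, ⟨y₂, h₂, -⟩⟩
        exact h₂ (by simpa [mem_ofPred_eq, hconst y₂, ← hconst y₁] using h₁)
      rw [hempty, ncard_empty, add_zero] at hsplit
      exact hsplit.trans (hinit.trans (Finset.sum_le_sum fun j _ => Nat.choose_le_succ n j))
    · obtain ⟨K, e, hK, he⟩ := h.exists_range_eq_setOf_apply_eq_zero hh
      rw [← hK] at hinit ⊢
      rw [← Finset.sum_range_choose_add_sum_range_choose]
      refine hsplit.trans (add_le_add hinit ?_)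
      calc _ ≤ (signPattern (Fin.init f) '' {y | h y = 0}).ncard :=
            ncard_le_ncard (image_signPattern_inter_subset _ h)
        _ = (range (signPattern fun i => (Fin.init f i).comp e)).ncard := by
            rw [← he, ← range_comp]; rfl
        _ ≤ _ := ih _

section Topology

variable [TopologicalSpace V] [IsTopologicalAddGroup V] [ContinuousSMul ℝ V]

theorem connectedComponentIn_eq_of_signPattern_eq (f : ι → V →ᵃ[ℝ] ℝ) {x x' : V}
    (hx : x ∈ {y | ∀ i, f i y ≠ 0}) (hx' : x' ∈ {y | ∀ i, f i y ≠ 0})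
    (hxx' : signPattern f x = signPattern f x') :
    connectedComponentIn {y | ∀ i, f i y ≠ 0} x = connectedComponentIn {y | ∀ i, f i y ≠ 0} x' :=
  connectedComponentIn_eq <|
    (convex_setOf_forall_ne_zero_and_signPattern_eq f (signPattern f x)).isPreconnected
      |>.subset_connectedComponentIn ⟨hx, rfl⟩ (fun _ hy => hy.1) ⟨hx', hxx'.symm⟩

theorem ncard_connectedComponentIn_le_ncard_range_signPattern [Finite ι]
    (f : ι → V →ᵃ[ℝ] ℝ) :
    {C | ∃ x ∈ {y | ∀ i, f i y ≠ 0}, C = connectedComponentIn {y | ∀ i, f i y ≠ 0} x}.ncard ≤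
      (range (signPattern f)).ncard := by
  have hC : {C | ∃ x ∈ {y | ∀ i, f i y ≠ 0}, C = connectedComponentIn {y | ∀ i, f i y ≠ 0} x} =
      connectedComponentIn {y | ∀ i, f i y ≠ 0} '' {y | ∀ i, f i y ≠ 0} := by
    ext; simp [eq_comm]
  rw [hC]
  exact (ncard_image_le_ncard_image_of_eq_imp_eq (toFinite _) fun x hx x' hx' =>
    connectedComponentIn_eq_of_signPattern_eq f hx hx').trans
      (ncard_le_ncard (image_subset_range _ _))

theorem ncard_connectedComponentIn_setOf_signPattern_eq_le [Finite ι] (f : ι → V →ᵃ[ℝ] ℝ) :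
    {R | ∃ x, R = connectedComponentIn {y | signPattern f y = signPattern f x} x}.ncard ≤
      (range (signPattern f)).ncard := by
  refine (ncard_le_ncard (t := (fun q => {y | signPattern f y = q}) '' range (signPattern f))
    ?_ ((toFinite _).image _)).trans ncard_image_le
  rintro _ ⟨x, rfl⟩
  exact ⟨_, mem_range_self x,
    ((convex_setOf_signPattern_eq f _).isPreconnected.connectedComponentIn rfl).symm⟩

end Topology

end SignPattern

def Matrix.affineRow {m n : Type*} [Fintype n] (W : Matrix m n ℝ) (b : m → ℝ) (i : m) :
    (n → ℝ) →ᵃ[ℝ] ℝ :=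
  (LinearMap.proj i ∘ₗ W.mulVecLin).toAffineMap + AffineMap.const ℝ (n → ℝ) (b i)

theorem Matrix.affineRow_apply {m n : Type*} [Fintype n] (W : Matrix m n ℝ) (b : m → ℝ) (i : m)
    (y : n → ℝ) : W.affineRow b i y = (W *ᵥ y + b) i := rfl

/-- (a) The complement of a union of `nH` affine hyperplanes in `ℝ^d` has at most
`∑_{j=0}^{d} C(nH, j)` connected components. (b) Consequently, a single-hidden-layer ReLU
network `f(x) = W₂ max(W₁ x + b₁, 0)` with input dimension `n₀` and `n₁` hidden units has at
most `∑_{j=0}^{n₀} C(n₁, j)` linear regions, where the linear regions are the maximal connected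
subsets of `ℝ^{n₀}` on which the sign pattern of `W₁ x + b₁` is constant. -/
theorem hyperplane_arrangement_regions_and_shallow_relu_regions :
    (∀ (d nH : ℕ) (a : Fin nH → Fin d → ℝ) (c : Fin nH → ℝ), (∀ i, a i ≠ 0) →
      {C : Set (Fin d → ℝ) | ∃ x ∈ {y : Fin d → ℝ | ∀ i, a i ⬝ᵥ y ≠ c i},
          C = connectedComponentIn {y : Fin d → ℝ | ∀ i, a i ⬝ᵥ y ≠ c i} x}.ncard ≤
        ∑ j ∈ Finset.range (d + 1), nH.choose j) ∧
    (∀ (n₀ n₁ : ℕ) (W₁ : Matrix (Fin n₁) (Fin n₀) ℝ) (b₁ : Fin n₁ → ℝ)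
        (_W₂ : Matrix (Fin 1) (Fin n₁) ℝ),
      {R : Set (Fin n₀ → ℝ) | ∃ x, R = connectedComponentIn
          {y : Fin n₀ → ℝ |
            (fun j => 0 < (W₁.mulVec y + b₁) j) = (fun j => 0 < (W₁.mulVec x + b₁) j)} x}.ncard ≤
        ∑ j ∈ Finset.range (n₀ + 1), n₁.choose j) := by
  constructor
  · intro d nH a c _
    have hU : {y : Fin d → ℝ | ∀ i, a i ⬝ᵥ y ≠ c i} =
        {y | ∀ i, (of a).affineRow (-c) i y ≠ 0} := by
      ext y
      simp [Matrix.affineRow_apply, mulVec, ← sub_eq_add_neg, sub_eq_zero]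
    have hcount := ncard_range_signPattern_le ((of a).affineRow (-c))
    rw [Module.finrank_fin_fun] at hcount
    rw [hU]
    exact (ncard_connectedComponentIn_le_ncard_range_signPattern _).trans hcount
  · intro n₀ n₁ W₁ b₁ _
    have hcount := ncard_range_signPattern_le (W₁.affineRow b₁)
    rw [Module.finrank_fin_fun] at hcount
    simp only [← Matrix.affineRow_apply]
    exact (ncard_connectedComponentIn_setOf_signPattern_eq_le _).trans hcount
end

section
/- Every continuous piecewise affine function f: ℝ^m → ℝ can be written as the difference f = γ − η of two convex continuous piecewise affine functions γ, η: ℝ^m → ℝ, each of which can be expressed as the pointwise maximum of finitely many affine functions. -/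
open Matrix

/-- A convex polyhedron in `ℝ^m`: a finite intersection of closed half-spaces. -/
def IsPolyhedron {m : ℕ} (P : Set (Fin m → ℝ)) : Prop :=
  ∃ (k : ℕ) (a : Fin k → Fin m → ℝ) (c : Fin k → ℝ), P = {x | ∀ i, a i ⬝ᵥ x ≤ c i}

/-- A continuous piecewise affine function `ℝ^m → ℝ`: continuous, and there is a finite
collection of convex polyhedra covering `ℝ^m` on each of which `f` is affine. -/
def IsCPWA {m : ℕ} (f : (Fin m → ℝ) → ℝ) : Prop :=
  Continuous f ∧ ∃ (M : ℕ) (P : Fin M → Set (Fin m → ℝ)),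
    (∀ i, IsPolyhedron (P i)) ∧ (⋃ i, P i) = Set.univ ∧
    ∀ i, ∃ (a : Fin m → ℝ) (c : ℝ), ∀ x ∈ P i, f x = a ⬝ᵥ x + c

/-!
Let `ℓᵢ` be the affine pieces of `f` and `η = ∑ᵢ ∑ⱼ |ℓᵢ - ℓⱼ|`, which is convex. Convexity of
`f + η` can be checked on lines, and on a line it is a local property: a continuous function
which is convex near every point of `ℝ` is convex. Near a point `t₀` of a line, `f` is `ℓ_q` to
the left of `t₀` and `ℓ_p` to the right, and `f + |ℓ_p - ℓ_q|` is a maximum of two affine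
functions there, because the kink of `|ℓ_p - ℓ_q|` dominates the kink of `f`.

A continuous convex function which agrees at every point with one of finitely many affine maps
is the maximum of those agreeing with it on an open set: each of them is a minorant by
convexity, and by Baire the open sets on which it agrees with one of them have dense union,
so every point lies in the closure of one.
-/

open Set Filter Topology

section Convexity

variable {E : Type*} [AddCommGroup E] [Module ℝ E]

theorem AffineMap.convexOn (ℓ : E →ᵃ[ℝ] ℝ) {s : Set E} (hs : Convex ℝ s) : ConvexOn ℝ s ℓ :=
  ((convexOn_id convex_univ).comp_affineMap ℓ).subset (subset_univ _) hs

theorem AffineMap.convexOn_abs (ℓ : E →ᵃ[ℝ] ℝ) {s : Set E} (hs : Convex ℝ s) :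
    ConvexOn ℝ s fun x => |ℓ x| :=
  ((convexOn_norm convex_univ).comp_affineMap ℓ).subset (subset_univ _) hs

theorem convexOn_finset_sum {ι : Type*} {s : Set E} (hs : Convex ℝ s) (t : Finset ι)
    {f : ι → E → ℝ} (hf : ∀ i ∈ t, ConvexOn ℝ s (f i)) :
    ConvexOn ℝ s fun x => ∑ i ∈ t, f i x := by
  classical
  induction t using Finset.induction_on with
  | empty => simpa using convexOn_const 0 hs
  | insert i t hi ih =>
    simp only [Finset.sum_insert hi]
    exact (hf i (t.mem_insert_self i)).add (ih fun j hj => hf j (Finset.mem_insert_of_mem hj))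

theorem convexOn_univ_of_forall_comp_lineMap {g : E → ℝ}
    (h : ∀ x y : E, ConvexOn ℝ univ (g ∘ AffineMap.lineMap (k := ℝ) x y)) :
    ConvexOn ℝ univ g := by
  refine ⟨convex_univ, fun x _ y _ a b ha hb hab => ?_⟩
  obtain rfl : a = 1 - b := by linarith
  simpa [AffineMap.lineMap_apply_module] using (h x y).2 (mem_univ 0) (mem_univ 1) ha hb hab

end Convexity

theorem convexOn_mul_add (α β : ℝ) {s : Set ℝ} (hs : Convex ℝ s) :
    ConvexOn ℝ s fun t => α * t + β :=
  ⟨hs, fun _ _ _ _ a b _ _ hab => le_of_eq <| by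
    simp only [smul_eq_mul]; linear_combination (-β) * hab⟩

theorem le_max_of_forall_nhds_convexOn {h : ℝ → ℝ} {x z : ℝ} (hxz : x ≤ z)
    (hc : ContinuousOn h (Icc x z)) (hloc : ∀ t ∈ Ioo x z, ∃ U ∈ 𝓝 t, ConvexOn ℝ U h)
    {y : ℝ} (hy : y ∈ Icc x z) : h y ≤ max (h x) (h z) := by
  obtain ⟨t₁, ht₁, hmax⟩ := isCompact_Icc.exists_isMaxOn (nonempty_Icc.2 hxz) hc
  set S := Icc x z ∩ h ⁻¹' {h t₁}
  have hSbdd : BddBelow S := ⟨x, fun t ht => ht.1.1⟩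
  have ht₀ : sInf S ∈ S :=
    (hc.preimage_isClosed_of_isClosed isClosed_Icc isClosed_singleton).csInf_mem
      ⟨t₁, ht₁, rfl⟩ hSbdd
  set t₀ := sInf S
  have hM : h t₀ = h t₁ := ht₀.2
  refine (hmax hy).trans ?_
  -- The leftmost maximiser `t₀` cannot be an interior point, by midpoint convexity near it.
  by_contra! hlt
  rw [← hM] at hlt
  have hxt₀ : x < t₀ := ht₀.1.1.lt_of_ne fun heq => by simp [← heq] at hlt
  have ht₀z : t₀ < z := ht₀.1.2.lt_of_ne fun heq => by simp [heq] at hlt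
  obtain ⟨U, hU, hconv⟩ := hloc t₀ ⟨hxt₀, ht₀z⟩
  obtain ⟨ε, hε, hball⟩ := Metric.mem_nhds_iff.1 (inter_mem hU (Ioo_mem_nhds hxt₀ ht₀z))
  rw [Real.ball_eq_Ioo] at hball
  have hl := hball (show t₀ - ε / 2 ∈ Ioo (t₀ - ε) (t₀ + ε) by constructor <;> linarith)
  have hr := hball (show t₀ + ε / 2 ∈ Ioo (t₀ - ε) (t₀ + ε) by constructor <;> linarith)
  have hleft : h (t₀ - ε / 2) < h t₀ := by
    refine (hM ▸ hmax (Ioo_subset_Icc_self hl.2) : h _ ≤ h t₀).lt_of_ne fun heq => ?_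
    have := csInf_le hSbdd ⟨Ioo_subset_Icc_self hl.2, heq.trans hM⟩
    linarith
  have hright : h (t₀ + ε / 2) ≤ h t₀ := hM ▸ hmax (Ioo_subset_Icc_self hr.2)
  have hmid := hconv.2 hl.1 hr.1 (by norm_num : (0 : ℝ) ≤ 1 / 2) (by norm_num : (0 : ℝ) ≤ 1 / 2)
    (by norm_num)
  rw [smul_eq_mul, smul_eq_mul, smul_eq_mul, smul_eq_mul,
    show 1 / 2 * (t₀ - ε / 2) + 1 / 2 * (t₀ + ε / 2) = t₀ by ring] at hmid
  linarith

theorem convexOn_univ_of_forall_nhds {g : ℝ → ℝ} (hg : Continuous g)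
    (hloc : ∀ t, ∃ U ∈ 𝓝 t, ConvexOn ℝ U g) : ConvexOn ℝ univ g := by
  refine convexOn_of_slope_mono_adjacent convex_univ fun {x y z} _ _ hxy hyz => ?_
  have hxz : 0 < z - x := by linarith
  -- `z - x` times `g` minus its chord over `[x, z]`
  set h : ℝ → ℝ := fun t => (z - x) * g t + ((g x - g z) * t + (x * g z - z * g x))
  have hloc' : ∀ t ∈ Ioo x z, ∃ U ∈ 𝓝 t, ConvexOn ℝ U h := fun t _ => by
    obtain ⟨U, hU, hconv⟩ := hloc t
    exact ⟨U, hU, (hconv.smul hxz.le).add (convexOn_mul_add _ _ hconv.1)⟩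
  have hy := le_max_of_forall_nhds_convexOn (hxy.trans hyz).le (by fun_prop) hloc' ⟨hxy.le, hyz.le⟩
  have hx : h x = 0 := by simp only [h]; ring
  have hz : h z = 0 := by simp only [h]; ring
  rw [hx, hz, max_self] at hy
  rw [div_le_div_iff₀ (sub_pos.2 hxy) (sub_pos.2 hyz)]
  simp only [h] at hy
  nlinarith

theorem convexOn_add_abs_sub_of_two_pieces {U : Set ℝ} (hU : Convex ℝ U) {f : ℝ → ℝ} {t₀ : ℝ}
    (ℓ₁ ℓ₂ : ℝ →ᵃ[ℝ] ℝ) (h₀ : ℓ₁ t₀ = ℓ₂ t₀) (hr : ∀ t ∈ U, t₀ ≤ t → f t = ℓ₁ t)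
    (hl : ∀ t ∈ U, t ≤ t₀ → f t = ℓ₂ t) :
    ConvexOn ℝ U fun t => f t + |ℓ₁ t - ℓ₂ t| := by
  obtain ⟨σ, hd⟩ : ∃ σ, ∀ t, ℓ₁ t - ℓ₂ t = σ * (t - t₀) := ⟨(ℓ₁ - ℓ₂).linear 1, fun t => by
    have := (ℓ₁ - ℓ₂).linearMap_vsub t t₀
    rw [vsub_eq_sub, ← mul_one (t - t₀), ← smul_eq_mul, map_smul] at this
    simpa [h₀, mul_comm] using this.symm⟩
  -- On `U` the function is `max (ℓ₁ + |σ| (t - t₀)) (ℓ₂ - |σ| (t - t₀))`.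
  refine (((ℓ₁.convexOn hU).add (convexOn_mul_add |σ| (-|σ| * t₀) hU)).sup
    ((ℓ₂.convexOn hU).add (convexOn_mul_add (-|σ|) (|σ| * t₀) hU))).congr fun t ht => ?_
  have hσ : 0 ≤ σ + |σ| := neg_le_iff_add_nonneg.1 (neg_abs_le σ)
  simp only [Pi.add_apply, Pi.sup_apply, hd]
  rcases le_total t₀ t with h | h
  · rw [hr t ht h, abs_mul, abs_of_nonneg (sub_nonneg.2 h), max_eq_left]
    · ring
    · linarith [hd t, mul_nonneg hσ (sub_nonneg.2 h), mul_nonneg (abs_nonneg σ) (sub_nonneg.2 h)]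
  · rw [hl t ht h, abs_mul, abs_of_nonpos (sub_nonpos.2 h), max_eq_right]
    · ring
    · linarith [hd t, mul_nonneg hσ (sub_nonneg.2 h), mul_nonneg (abs_nonneg σ) (sub_nonneg.2 h)]

theorem eventually_forall_mem_imp_mem {X ι : Type*} [TopologicalSpace X] [Finite ι]
    {P : ι → Set X} (hP : ∀ i, IsClosed (P i)) (x : X) :
    ∀ᶠ y in 𝓝 x, ∀ i, y ∈ P i → x ∈ P i :=
  eventually_all.2 fun i => by
    by_cases hx : x ∈ P i
    · exact .of_forall fun _ _ => hx
    · filter_upwards [(hP i).isOpen_compl.mem_nhds hx] with y hy h using absurd h hy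

theorem exists_nhds_convexOn_add_sum_abs_sub {ι : Type*} [Fintype ι] {f : ℝ → ℝ}
    {P : ι → Set ℝ} (hPc : ∀ i, IsClosed (P i)) (hPconv : ∀ i, Convex ℝ (P i))
    (hP : ⋃ i, P i = univ) (ℓ : ι → ℝ →ᵃ[ℝ] ℝ) (hfℓ : ∀ i, EqOn f (ℓ i) (P i)) (t₀ : ℝ) :
    ∃ U ∈ 𝓝 t₀, ConvexOn ℝ U fun t => f t + ∑ p : ι × ι, |ℓ p.1 t - ℓ p.2 t| := by
  classical
  obtain ⟨l, u, ⟨hl, hu⟩, hlu⟩ :=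
    mem_nhds_iff_exists_Ioo_subset.1 (eventually_forall_mem_imp_mem hPc t₀)
  have hpiece : ∀ t ∈ Ioo l u, ∃ i, t ∈ P i ∧ t₀ ∈ P i := fun t ht => by
    obtain ⟨i, hi⟩ := mem_iUnion.1 (hP ▸ mem_univ t)
    exact ⟨i, hi, hlu ht i hi⟩
  obtain ⟨p, hpu, hp⟩ := hpiece ((t₀ + u) / 2) ⟨by linarith, by linarith⟩
  obtain ⟨q, hql, hq⟩ := hpiece ((l + t₀) / 2) ⟨by linarith, by linarith⟩
  have hU : Convex ℝ (Ioo ((l + t₀) / 2) ((t₀ + u) / 2)) := convex_Ioo _ _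
  have hpq := convexOn_add_abs_sub_of_two_pieces hU (ℓ p) (ℓ q)
    ((hfℓ p hp).symm.trans (hfℓ q hq))
    (fun t ht h => hfℓ p ((hPconv p).ordConnected.out hp hpu ⟨h, ht.2.le⟩))
    (fun t ht h => hfℓ q ((hPconv q).ordConnected.out hql hq ⟨ht.1.le, h⟩))
  have hrest := convexOn_finset_sum hU (Finset.univ.erase (p, q))
    fun r _ => (ℓ r.1 - ℓ r.2).convexOn_abs hU
  refine ⟨_, Ioo_mem_nhds (by linarith) (by linarith), (hpq.add hrest).congr fun t _ => ?_⟩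
  simp only [Pi.add_apply, AffineMap.coe_sub, Pi.sub_apply, add_assoc]
  exact congrArg (f t + ·) <|
    Finset.add_sum_erase _ (fun r : ι × ι => |ℓ r.1 t - ℓ r.2 t|) (Finset.mem_univ (p, q))

theorem convexOn_add_sum_abs_sub {E ι : Type*} [AddCommGroup E] [Module ℝ E]
    [TopologicalSpace E] [IsTopologicalAddGroup E] [ContinuousSMul ℝ E] [Fintype ι]
    {f : E → ℝ} (hf : Continuous f) {P : ι → Set E} (hPc : ∀ i, IsClosed (P i))
    (hPconv : ∀ i, Convex ℝ (P i)) (hP : ⋃ i, P i = univ) (ℓ : ι → E →ᵃ[ℝ] ℝ)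
    (hfℓ : ∀ i, EqOn f (ℓ i) (P i)) :
    ConvexOn ℝ univ fun x => f x + ∑ p : ι × ι, |ℓ p.1 x - ℓ p.2 x| := by
  refine convexOn_univ_of_forall_comp_lineMap fun x y => ?_
  set L : ℝ →ᵃ[ℝ] E := AffineMap.lineMap x y
  have hL : Continuous L := AffineMap.lineMap_continuous
  have hℓL : ∀ i, Continuous ((ℓ i).comp L) := fun i =>
    AffineMap.continuous_of_finiteDimensional _
  refine convexOn_univ_of_forall_nhds
    ((hf.comp hL).add (continuous_finsetSum _ fun p _ => ((hℓL p.1).sub (hℓL p.2)).abs))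
    fun t₀ => exists_nhds_convexOn_add_sum_abs_sub (P := fun i => L ⁻¹' P i)
      (fun i => (hPc i).preimage hL) (fun i => (hPconv i).affine_preimage L)
      (by rw [← preimage_iUnion, hP, preimage_univ]) (fun i => (ℓ i).comp L)
      (fun i _ ht => hfℓ i ht) t₀

section MaxOfAffine

variable {E : Type*} [AddCommGroup E] [Module ℝ E] [TopologicalSpace E]
  [IsTopologicalAddGroup E] [ContinuousSMul ℝ E]

theorem ConvexOn.affineMap_le_of_eventuallyEq {g : E → ℝ} (hg : ConvexOn ℝ univ g)
    (ℓ : E →ᵃ[ℝ] ℝ) {y : E} (hy : g =ᶠ[𝓝 y] ℓ) (x : E) : ℓ x ≤ g x := by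
  have hL : Tendsto (AffineMap.lineMap y x : ℝ → E) (𝓝[>] 0) (𝓝 y) := by
    simpa using (AffineMap.lineMap_continuous.tendsto (0 : ℝ)).mono_left nhdsWithin_le_nhds
  obtain ⟨t, hgt, ht⟩ := ((hL.eventually hy).and (Ioo_mem_nhdsGT one_pos)).exists
  have hconv :=
    hg.2 (mem_univ y) (mem_univ x) (sub_nonneg.2 ht.2.le) ht.1.le (sub_add_cancel 1 t)
  rw [← AffineMap.lineMap_apply_module, hgt, AffineMap.apply_lineMap,
    AffineMap.lineMap_apply_ring, hy.eq_of_nhds, smul_eq_mul, smul_eq_mul] at hconv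
  nlinarith [ht.1]

theorem ConvexOn.exists_eq_finset_sup' [BaireSpace E] {κ : Type*} [Finite κ] {g : E → ℝ}
    (hg : ConvexOn ℝ univ g) (hgc : Continuous g) (Λ : κ → E →ᵃ[ℝ] ℝ)
    (hΛ : ∀ k, Continuous (Λ k)) (hgΛ : ∀ x, ∃ k, g x = Λ k x) :
    ∃ (s : Finset κ) (hs : s.Nonempty), ∀ x, g x = s.sup' hs fun k => Λ k x := by
  classical
  have := Fintype.ofFinite κ
  set P : κ → Set E := fun k => {x | g x = Λ k x}
  have hPc : ∀ k, IsClosed (P k) := fun k => isClosed_eq hgc (hΛ k)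
  have hdense := dense_iUnion_interior_of_closed hPc <|
    eq_univ_of_forall fun x => mem_iUnion.2 (hgΛ x)
  have hgood : ∀ x, ∃ k, (interior (P k)).Nonempty ∧ g x = Λ k x := fun x => by
    obtain ⟨k, hk⟩ := mem_iUnion.1 <| closure_iUnion_of_finite (fun k => interior (P k)) ▸ hdense x
    exact ⟨k, closure_nonempty_iff.1 ⟨x, hk⟩,
      (hPc k).closure_subset (closure_mono interior_subset hk)⟩
  set s := Finset.univ.filter fun k => (interior (P k)).Nonempty
  obtain ⟨k₀, hk₀, -⟩ := hgood 0
  refine ⟨s, ⟨k₀, by simpa [s] using hk₀⟩, fun x => le_antisymm ?_ ?_⟩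
  · obtain ⟨k, hk, hx⟩ := hgood x
    exact hx ▸ Finset.le_sup' (fun k => Λ k x) (by simpa [s] using hk)
  · refine Finset.sup'_le _ _ fun k hk => ?_
    obtain ⟨y, hy⟩ : (interior (P k)).Nonempty := by simpa [s] using hk
    exact hg.affineMap_le_of_eventuallyEq (Λ k) (mem_interior_iff_mem_nhds.1 hy) x

end MaxOfAffine

theorem AffineMap.sum_apply {E F ι : Type*} [AddCommGroup E] [Module ℝ E] [AddCommGroup F]
    [Module ℝ F] (s : Finset ι) (ℓ : ι → E →ᵃ[ℝ] F) (x : E) :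
    (∑ i ∈ s, ℓ i) x = ∑ i ∈ s, ℓ i x :=
  map_sum (⟨⟨fun ℓ => ℓ x, rfl⟩, fun _ _ => rfl⟩ : (E →ᵃ[ℝ] F) →+ F) ℓ s

theorem AffineMap.exists_sum_abs_eq {E ι : Type*} [AddCommGroup E] [Module ℝ E] [Fintype ι]
    (d : ι → E →ᵃ[ℝ] ℝ) (x : E) :
    ∃ s : ι → SignType, ∑ i, |d i x| = (∑ i, (s i : ℝ) • d i) x :=
  ⟨fun i => SignType.sign (d i x), by simp [AffineMap.sum_apply]⟩

section DotProduct

variable {n : Type*} [Fintype n]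

def dotProductAffine (a : n → ℝ) (c : ℝ) : (n → ℝ) →ᵃ[ℝ] ℝ :=
  (dotProductBilin ℝ ℝ a).toAffineMap + AffineMap.const ℝ (n → ℝ) c

@[simp]
theorem dotProductAffine_apply (a : n → ℝ) (c : ℝ) (x : n → ℝ) :
    dotProductAffine a c x = a ⬝ᵥ x + c :=
  rfl

theorem AffineMap.exists_dotProduct_add [DecidableEq n] (ℓ : (n → ℝ) →ᵃ[ℝ] ℝ) :
    ∃ (a : n → ℝ) (c : ℝ), ∀ x, ℓ x = a ⬝ᵥ x + c := by
  refine ⟨fun i => ℓ.linear (Pi.single i 1), ℓ 0, fun x => ?_⟩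
  conv_lhs => rw [ℓ.decomp, pi_eq_sum_univ' x]
  simp [dotProduct, mul_comm]

theorem exists_fin_sup'_dotProduct_eq {κ : Type*} (s : Finset κ) (hs : s.Nonempty)
    (Λ : κ → (n → ℝ) →ᵃ[ℝ] ℝ) :
    ∃ (N : ℕ) (a : Fin (N + 1) → n → ℝ) (c : Fin (N + 1) → ℝ), ∀ x,
      s.sup' hs (fun k => Λ k x) =
        Finset.univ.sup' Finset.univ_nonempty fun i => a i ⬝ᵥ x + c i := by
  classical
  choose a c hac using fun k => (Λ k).exists_dotProduct_add
  obtain ⟨N, hN⟩ : ∃ N, s.card = N + 1 := Nat.exists_eq_add_one.2 hs.card_pos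
  set e : Fin (N + 1) ≃ s := (s.equivFin.trans (finCongr hN)).symm
  refine ⟨N, fun i => a (e i), fun i => c (e i), fun x => le_antisymm ?_ ?_⟩
  · refine Finset.sup'_le _ _ fun k hk => ?_
    exact Finset.le_sup'_of_le _ (Finset.mem_univ (e.symm ⟨k, hk⟩)) (by simp [hac])
  · exact Finset.sup'_le _ _ fun i _ => hac _ x ▸ Finset.le_sup' (fun k => Λ k x) (e i).2

theorem ConvexOn.exists_eq_fin_sup'_dotProduct {κ : Type*} [Finite κ] {g : (n → ℝ) → ℝ}
    (hg : ConvexOn ℝ univ g) (hgc : Continuous g) (Λ : κ → (n → ℝ) →ᵃ[ℝ] ℝ)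
    (hgΛ : ∀ x, ∃ k, g x = Λ k x) :
    ∃ (N : ℕ) (a : Fin (N + 1) → n → ℝ) (c : Fin (N + 1) → ℝ), ∀ x,
      g x = Finset.univ.sup' Finset.univ_nonempty fun i => a i ⬝ᵥ x + c i := by
  obtain ⟨s, hs, hgs⟩ := hg.exists_eq_finset_sup' hgc Λ
    (fun _ => AffineMap.continuous_of_finiteDimensional _) hgΛ
  obtain ⟨N, a, c, hsup⟩ := exists_fin_sup'_dotProduct_eq s hs Λ
  exact ⟨N, a, c, fun x => (hgs x).trans (hsup x)⟩

end DotProduct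

theorem IsPolyhedron.isClosed {m : ℕ} {P : Set (Fin m → ℝ)} (hP : IsPolyhedron P) :
    IsClosed P := by
  obtain ⟨k, a, c, rfl⟩ := hP
  simp only [ofPred_forall]
  exact isClosed_iInter fun i => isClosed_le (by fun_prop) continuous_const

theorem IsPolyhedron.convex {m : ℕ} {P : Set (Fin m → ℝ)} (hP : IsPolyhedron P) :
    Convex ℝ P := by
  obtain ⟨k, a, c, rfl⟩ := hP
  simp only [ofPred_forall]
  exact convex_iInter fun i => convex_halfSpace_le (dotProductBilin ℝ ℝ (a i)).isLinear (c i)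

theorem isCPWA_of_eq_sup' {m N : ℕ} {g : (Fin m → ℝ) → ℝ} (a : Fin (N + 1) → Fin m → ℝ)
    (c : Fin (N + 1) → ℝ)
    (hg : ∀ x, g x = Finset.univ.sup' Finset.univ_nonempty fun i => a i ⬝ᵥ x + c i) :
    IsCPWA g := by
  refine ⟨?_, N + 1, fun i => {x | ∀ j, (a j - a i) ⬝ᵥ x ≤ c i - c j}, fun i => ⟨_, _, _, rfl⟩,
    ?_, fun i => ⟨a i, c i, fun x hx => ?_⟩⟩
  · rw [funext hg]
    exact Continuous.finset_sup'_apply _ fun i _ => by fun_prop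
  · refine eq_univ_of_forall fun x => mem_iUnion.2 ?_
    obtain ⟨i, -, hi⟩ :=
      Finset.exists_max_image Finset.univ (fun i => a i ⬝ᵥ x + c i) Finset.univ_nonempty
    exact ⟨i, fun j => by rw [sub_dotProduct]; linarith [hi j (Finset.mem_univ j)]⟩
  · refine (hg x).trans <| le_antisymm (Finset.sup'_le _ _ fun j _ => ?_)
      (Finset.le_sup' (fun j => a j ⬝ᵥ x + c j) (Finset.mem_univ i))
    have := hx j
    rw [sub_dotProduct] at this
    linarith

/-- Every continuous piecewise affine `f : ℝ^m → ℝ` is the difference `f = γ − η`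
of two convex continuous piecewise affine functions, each expressible as the pointwise maximum
of finitely many affine functions. -/
theorem cpwa_eq_diff_of_max_affine (m : ℕ) (f : (Fin m → ℝ) → ℝ) (hf : IsCPWA f) :
    ∃ (N₁ N₂ : ℕ) (a : Fin (N₁ + 1) → Fin m → ℝ) (c : Fin (N₁ + 1) → ℝ)
      (p : Fin (N₂ + 1) → Fin m → ℝ) (q : Fin (N₂ + 1) → ℝ)
      (γ η : (Fin m → ℝ) → ℝ),
      (∀ x, γ x = Finset.univ.sup' Finset.univ_nonempty (fun i => a i ⬝ᵥ x + c i)) ∧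
      (∀ x, η x = Finset.univ.sup' Finset.univ_nonempty (fun i => p i ⬝ᵥ x + q i)) ∧
      ConvexOn ℝ Set.univ γ ∧ ConvexOn ℝ Set.univ η ∧
      IsCPWA γ ∧ IsCPWA η ∧
      (∀ x, f x = γ x - η x) := by
  obtain ⟨hfc, M, P, hP, hcover, hA⟩ := hf
  choose A C hAC using hA
  set ℓ : Fin M → (Fin m → ℝ) →ᵃ[ℝ] ℝ := fun i => dotProductAffine (A i) (C i)
  set d : Fin M × Fin M → (Fin m → ℝ) →ᵃ[ℝ] ℝ := fun p => ℓ p.1 - ℓ p.2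
  set η : (Fin m → ℝ) → ℝ := fun x => ∑ p, |d p x|
  have hη : ConvexOn ℝ univ η :=
    convexOn_finset_sum convex_univ _ fun p _ => (d p).convexOn_abs convex_univ
  have hγ : ConvexOn ℝ univ fun x => f x + η x :=
    convexOn_add_sum_abs_sub (ι := Fin M) hfc (fun i => (hP i).isClosed) (fun i => (hP i).convex)
      hcover ℓ hAC
  have hηc : Continuous η := continuous_finsetSum _ fun p _ =>
    (AffineMap.continuous_of_finiteDimensional (d p)).abs
  -- `η` and `f + η` are affine where the signs `s` of all `d p` and the piece `i` are fixed.
  set Λη : (Fin M × Fin M → SignType) → (Fin m → ℝ) →ᵃ[ℝ] ℝ := fun s => ∑ p, (s p : ℝ) • d p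
  set Λγ : Fin M × (Fin M × Fin M → SignType) → (Fin m → ℝ) →ᵃ[ℝ] ℝ := fun is =>
    ℓ is.1 + Λη is.2
  obtain ⟨N₂, p, q, hpq⟩ :=
    hη.exists_eq_fin_sup'_dotProduct hηc Λη (AffineMap.exists_sum_abs_eq d)
  obtain ⟨N₁, a, c, hac⟩ := hγ.exists_eq_fin_sup'_dotProduct (hfc.add hηc) Λγ fun x => by
    obtain ⟨i, hi⟩ := mem_iUnion.1 (hcover ▸ mem_univ x)
    obtain ⟨s, hs⟩ := AffineMap.exists_sum_abs_eq d x
    exact ⟨(i, s), by simp [η, Λγ, Λη, hs, hAC i x hi, ℓ]⟩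
  exact ⟨N₁, N₂, a, c, p, q, _, η, hac, hpq, hγ, hη, isCPWA_of_eq_sup' a c hac,
    isCPWA_of_eq_sup' p q hpq, fun x => by ring⟩
end

section
/- Consider, for parameter x ∈ [0, 3], the linear program in z = (z_1, z_2) ∈ ℝ²: minimize z_1 − z_2 subject to −x ≤ z_1, x − 2 ≤ z_1, (7/2)x − 5 ≤ z_1, z_2 ≤ x, z_2 ≤ −(1/2)x + 1, and z_2 ≤ −(5/2)x + 5. For every x ∈ [0, 3] this program has the unique optimizer z_1*(x) = γ(x) = max(−x, x − 2, (7/2)x − 5) and z_2*(x) = −η(x) = min(x, −(1/2)x + 1, −(5/2)x + 5); consequently the linear map T = (1, 1) applied to the optimizer recovers T(z_1*(x), z_2*(x)) = γ(x) − η(x) = f(x), where f is the piecewise affine function equal to 0 for x ≤ 2/3, −(3/2)x + 1 for 2/3 ≤ x ≤ 1, (1/2)x − 1 for 1 ≤ x ≤ 6/5, 3x − 4 for 6/5 ≤ x ≤ 2, and x for x ≥ 2. -/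
/-! The constraints on `z₁` only bound it from below and those on `z₂` only bound it from
above, so the program splits: `z₁ − z₂` is minimized exactly by the largest lower bound
`γ x` for `z₁` and the smallest upper bound `−η x` for `z₂`, and strictly increases when
either coordinate moves off it. The formula for `f` then follows by locating, on each
interval between the breakpoints `2/3, 1, 6/5, 2`, the active pieces of `γ` and `η`. -/

lemma eq_and_eq_of_sub_eq_sub_of_le_of_le {α : Type*} [AddCommGroup α] [PartialOrder α]
    [IsOrderedAddMonoid α] {a b c d : α} (hac : a ≤ c) (hdb : d ≤ b) (h : c - d = a - b) :
    c = a ∧ d = b := by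
  rw [sub_eq_add_neg, sub_eq_add_neg] at h
  obtain ⟨hca, hdb'⟩ := (add_eq_add_iff_eq_and_eq hac (neg_le_neg hdb)).1 h.symm
  exact ⟨hca.symm, neg_injective hdb'.symm⟩

namespace MpLPExample

noncomputable def gammaPWA (x : ℝ) : ℝ := max (-x) (max (x - 2) ((7 / 2) * x - 5))

noncomputable def etaPWA (x : ℝ) : ℝ := max (-x) (max ((1 / 2) * x - 1) ((5 / 2) * x - 5))

def IsFeasible (x z₁ z₂ : ℝ) : Prop :=
  -x ≤ z₁ ∧ x - 2 ≤ z₁ ∧ (7 / 2) * x - 5 ≤ z₁ ∧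
    z₂ ≤ x ∧ z₂ ≤ -(1 / 2) * x + 1 ∧ z₂ ≤ -(5 / 2) * x + 5

variable {x : ℝ}

lemma neg_etaPWA (x : ℝ) : -etaPWA x = min x (min (-(1 / 2) * x + 1) (-(5 / 2) * x + 5)) := by
  rw [etaPWA, neg_sup, neg_sup, neg_neg, neg_sub', neg_sub']
  ring_nf

lemma isFeasible_iff {z₁ z₂ : ℝ} :
    IsFeasible x z₁ z₂ ↔ gammaPWA x ≤ z₁ ∧ z₂ ≤ -etaPWA x := by
  simp only [IsFeasible, gammaPWA, neg_etaPWA, max_le_iff, le_min_iff, and_assoc]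

lemma gammaPWA_of_le_one (hx : x ≤ 1) : gammaPWA x = -x :=
  max_eq_left (max_le (by linarith) (by linarith))

lemma gammaPWA_of_mem_Icc (hx : x ∈ Set.Icc 1 (6 / 5)) : gammaPWA x = x - 2 := by
  obtain ⟨h₁, h₂⟩ := hx
  rw [gammaPWA, max_eq_left (by linarith : (7 / 2) * x - 5 ≤ x - 2), max_eq_right (by linarith)]

lemma gammaPWA_of_six_fifths_le (hx : 6 / 5 ≤ x) : gammaPWA x = (7 / 2) * x - 5 := by
  rw [gammaPWA, max_eq_right (by linarith : x - 2 ≤ (7 / 2) * x - 5), max_eq_right (by linarith)]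

lemma etaPWA_of_le_two_thirds (hx : x ≤ 2 / 3) : etaPWA x = -x :=
  max_eq_left (max_le (by linarith) (by linarith))

lemma etaPWA_of_mem_Icc (hx : x ∈ Set.Icc (2 / 3) 2) : etaPWA x = (1 / 2) * x - 1 := by
  obtain ⟨h₁, h₂⟩ := hx
  rw [etaPWA, max_eq_left (by linarith : (5 / 2) * x - 5 ≤ (1 / 2) * x - 1),
    max_eq_right (by linarith)]

lemma etaPWA_of_two_le (hx : 2 ≤ x) : etaPWA x = (5 / 2) * x - 5 := by
  rw [etaPWA, max_eq_right (by linarith : (1 / 2) * x - 1 ≤ (5 / 2) * x - 5),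
    max_eq_right (by linarith)]

end MpLPExample

open MpLPExample in
/-- For each parameter `x ∈ [0, 3]`, the linear program in `z = (z₁, z₂) ∈ ℝ²`
  minimize `z₁ − z₂`
  subject to `−x ≤ z₁`, `x − 2 ≤ z₁`, `(7/2)x − 5 ≤ z₁`,
             `z₂ ≤ x`, `z₂ ≤ −(1/2)x + 1`, `z₂ ≤ −(5/2)x + 5`
has the unique optimizer `z₁*(x) = γ(x) = max(−x, x − 2, (7/2)x − 5)` and
`z₂*(x) = −η(x) = min(x, −(1/2)x + 1, −(5/2)x + 5)`, and applying the linear map `T = (1, 1)`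
recovers `z₁*(x) + z₂*(x) = γ(x) − η(x) = f(x)`, where `f` is the piecewise affine function
equal to `0` for `x ≤ 2/3`, `−(3/2)x + 1` for `2/3 ≤ x ≤ 1`, `(1/2)x − 1` for `1 ≤ x ≤ 6/5`,
`3x − 4` for `6/5 ≤ x ≤ 2`, and `x` for `x ≥ 2`. -/
theorem example_mpLP_explicit_solution
    (f γ η : ℝ → ℝ)
    (hf₀ : ∀ x : ℝ, x ≤ 2 / 3 → f x = 0)
    (hf₁ : ∀ x : ℝ, 2 / 3 ≤ x → x ≤ 1 → f x = -(3 / 2) * x + 1)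
    (hf₂ : ∀ x : ℝ, 1 ≤ x → x ≤ 6 / 5 → f x = (1 / 2) * x - 1)
    (hf₃ : ∀ x : ℝ, 6 / 5 ≤ x → x ≤ 2 → f x = 3 * x - 4)
    (hf₄ : ∀ x : ℝ, 2 ≤ x → f x = x)
    (hγ : ∀ x : ℝ, γ x = max (-x) (max (x - 2) ((7 / 2) * x - 5)))
    (hη : ∀ x : ℝ, η x = max (-x) (max ((1 / 2) * x - 1) ((5 / 2) * x - 5))) :
    ∀ x : ℝ, 0 ≤ x → x ≤ 3 →
      -- the optimizer z* = (γ x, −η x), where −η x is the stated minimum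
      (-η x = min x (min (-(1 / 2) * x + 1) (-(5 / 2) * x + 5))) ∧
      -- z* is feasible
      (-x ≤ γ x ∧ x - 2 ≤ γ x ∧ (7 / 2) * x - 5 ≤ γ x ∧
        -η x ≤ x ∧ -η x ≤ -(1 / 2) * x + 1 ∧ -η x ≤ -(5 / 2) * x + 5) ∧
      -- z* is optimal
      (∀ z₁ z₂ : ℝ,
        (-x ≤ z₁ ∧ x - 2 ≤ z₁ ∧ (7 / 2) * x - 5 ≤ z₁ ∧
          z₂ ≤ x ∧ z₂ ≤ -(1 / 2) * x + 1 ∧ z₂ ≤ -(5 / 2) * x + 5) →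
        γ x - (-η x) ≤ z₁ - z₂) ∧
      -- z* is the unique optimizer
      (∀ z₁ z₂ : ℝ,
        (-x ≤ z₁ ∧ x - 2 ≤ z₁ ∧ (7 / 2) * x - 5 ≤ z₁ ∧
          z₂ ≤ x ∧ z₂ ≤ -(1 / 2) * x + 1 ∧ z₂ ≤ -(5 / 2) * x + 5) →
        z₁ - z₂ = γ x - (-η x) → z₁ = γ x ∧ z₂ = -η x) ∧
      -- the linear map T = (1, 1) applied to z* recovers f
      (γ x + (-η x) = f x) := by
  intro x _ _
  rw [show γ x = gammaPWA x from hγ x, show η x = etaPWA x from hη x]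
  refine ⟨neg_etaPWA x, isFeasible_iff.2 ⟨le_rfl, le_rfl⟩, fun z₁ z₂ hz ↦ ?_,
    fun z₁ z₂ hz heq ↦ ?_, ?_⟩
  · obtain ⟨h₁, h₂⟩ := isFeasible_iff.1 hz
    exact sub_le_sub h₁ h₂
  · obtain ⟨h₁, h₂⟩ := isFeasible_iff.1 hz
    exact eq_and_eq_of_sub_eq_sub_of_le_of_le h₁ h₂ heq
  rw [← sub_eq_add_neg]
  rcases le_total x (2 / 3) with h₀ | h₀
  · rw [gammaPWA_of_le_one (by linarith), etaPWA_of_le_two_thirds h₀, hf₀ x h₀]; ring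
  rcases le_total x 1 with h₁ | h₁
  · rw [gammaPWA_of_le_one h₁, etaPWA_of_mem_Icc ⟨h₀, by linarith⟩, hf₁ x h₀ h₁]; ring
  rcases le_total x (6 / 5) with h₂ | h₂
  · rw [gammaPWA_of_mem_Icc ⟨h₁, h₂⟩, etaPWA_of_mem_Icc ⟨h₀, by linarith⟩,
      hf₂ x h₁ h₂]; ring
  rcases le_total x 2 with h₃ | h₃
  · rw [gammaPWA_of_six_fifths_le h₂, etaPWA_of_mem_Icc ⟨h₀, h₃⟩, hf₃ x h₂ h₃]; ring
  · rw [gammaPWA_of_six_fifths_le h₂, etaPWA_of_two_le h₃, hf₄ x h₃]; ring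
end
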